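/- arXiv:2111.01966 — 5 statements merged into one kernel-verified Lean document; each statement's English description precedes it below -/
import Mathlib

section
/- Let n > 2 be an integer and let H ∈ ℝ satisfy −2√(n−1)/n ≤ H ≤ 1. Then for every C ∈ ℝ there is no differentiable nonconstant function g : ℝ → ℝ with g(t) > 0 and g′(t)² = C − g(t)² + (H·g(t) + g(t)^(1−n))² for all t ∈ ℝ. -/
lemma aux_nH (n : ℕ) (hn : 2 < n) (H : ℝ)
    (hH₁ : -(2 * Real.sqrt ((n : ℝ) - 1) / (n : ℝ)) ≤ H) :
    -(2 * Real.sqrt ((n : ℝ) - 1)) ≤ (n : ℝ) * H := by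
  have hn3 : (3 : ℝ) ≤ (n : ℝ) := by exact_mod_cast hn
  have hN : (0 : ℝ) < n := by linarith
  have h : -H ≤ 2 * Real.sqrt ((n : ℝ) - 1) / (n : ℝ) := neg_le.mp hH₁
  have h2 : (n : ℝ) * (-H) ≤ (n : ℝ) * (2 * Real.sqrt ((n : ℝ) - 1) / (n : ℝ)) :=
    mul_le_mul_of_nonneg_left h hN.le
  rw [mul_div_cancel₀ _ hN.ne'] at h2
  linarith

lemma aux_disc (n : ℕ) (hn : 2 < n) (H : ℝ)
    (hH₁ : -(2 * Real.sqrt ((n : ℝ) - 1) / (n : ℝ)) ≤ H) (hH : H < 0) :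
    0 ≤ 4 * ((n : ℝ) - 1) - ((n : ℝ) * H) ^ 2 := by
  have hn3 : (3 : ℝ) ≤ (n : ℝ) := by exact_mod_cast hn
  have hs0 : 0 ≤ Real.sqrt ((n : ℝ) - 1) := Real.sqrt_nonneg _
  have hs2 : Real.sqrt ((n : ℝ) - 1) ^ 2 = (n : ℝ) - 1 := Real.sq_sqrt (by linarith)
  have h1 := aux_nH n hn H hH₁
  have h2 : (n : ℝ) * H ≤ 2 * Real.sqrt ((n : ℝ) - 1) := by nlinarith
  nlinarith [mul_nonneg (show (0:ℝ) ≤ 2 * Real.sqrt ((n : ℝ) - 1) - (n:ℝ) * H by linarith)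
    (show (0:ℝ) ≤ 2 * Real.sqrt ((n : ℝ) - 1) + (n:ℝ) * H by linarith)]

lemma aux_P_nonneg (n : ℕ) (hn : 2 < n) (H : ℝ)
    (hH₁ : -(2 * Real.sqrt ((n : ℝ) - 1) / (n : ℝ)) ≤ H) (hH₂ : H ≤ 1)
    (u : ℝ) (hu : 0 < u) :
    0 ≤ ((n : ℝ) - 1) * u ^ 2 + ((n : ℝ) - 2) * H * u + (1 - H ^ 2) := by
  have hn3 : (3 : ℝ) ≤ (n : ℝ) := by exact_mod_cast hn
  rcases le_or_gt 0 H with hH | hH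
  · have hA : 0 < ((n:ℝ) - 1) * u ^ 2 := mul_pos (by linarith) (pow_pos hu 2)
    have hB : 0 ≤ ((n:ℝ) - 2) * H * u := by
      apply mul_nonneg (mul_nonneg (by linarith) hH) hu.le
    have hC : 0 ≤ 1 - H ^ 2 := by nlinarith
    linarith
  · have h4 := aux_disc n hn H hH₁ hH
    nlinarith [sq_nonneg (2 * ((n:ℝ) - 1) * u + ((n:ℝ) - 2) * H), hn3]

lemma aux_P_key (n : ℕ) (hn : 2 < n) (H : ℝ)
    (hH₁ : -(2 * Real.sqrt ((n : ℝ) - 1) / (n : ℝ)) ≤ H) (hH₂ : H ≤ 1)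
    (u v : ℝ) (hu : 0 < u) (huv : u < v) :
    0 < ((n : ℝ) - 1) * u ^ 2 + ((n : ℝ) - 2) * H * u + (1 - H ^ 2) ∨
    0 < ((n : ℝ) - 1) * v ^ 2 + ((n : ℝ) - 2) * H * v + (1 - H ^ 2) := by
  have hn3 : (3 : ℝ) ≤ (n : ℝ) := by exact_mod_cast hn
  by_contra hc
  push_neg at hc
  obtain ⟨hPu, hPv⟩ := hc
  rcases le_or_gt 0 H with hH | hH
  · have hA : 0 < ((n:ℝ) - 1) * u ^ 2 := mul_pos (by linarith) (pow_pos hu 2)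
    have hB : 0 ≤ ((n:ℝ) - 2) * H * u := by
      apply mul_nonneg (mul_nonneg (by linarith) hH) hu.le
    have hC : 0 ≤ 1 - H ^ 2 := by nlinarith
    linarith
  · have hv : 0 < v := hu.trans huv
    have h4 := aux_disc n hn H hH₁ hH
    have hAu : (2 * ((n:ℝ) - 1) * u + ((n:ℝ) - 2) * H) ^ 2 ≤ 0 := by nlinarith
    have hAv : (2 * ((n:ℝ) - 1) * v + ((n:ℝ) - 2) * H) ^ 2 ≤ 0 := by nlinarith
    have hu0 : 2 * ((n:ℝ) - 1) * u + ((n:ℝ) - 2) * H = 0 :=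
      pow_eq_zero_iff (two_ne_zero) |>.mp (le_antisymm hAu (sq_nonneg _))
    have hv0 : 2 * ((n:ℝ) - 1) * v + ((n:ℝ) - 2) * H = 0 :=
      pow_eq_zero_iff (two_ne_zero) |>.mp (le_antisymm hAv (sq_nonneg _))
    nlinarith [mul_pos (show (0:ℝ) < (n:ℝ) - 1 by linarith) (sub_pos.mpr huv)]
lemma aux_F_hasDeriv (n : ℕ) (H C : ℝ) (x : ℝ) (hx : 0 < x) :
    HasDerivAt (fun x : ℝ => C - x ^ 2 + (H * x + x ^ (1 - (n : ℤ))) ^ 2)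
      (-(2 * x) * (((n : ℝ) - 1) * (x ^ (-(n : ℤ))) ^ 2 +
        ((n : ℝ) - 2) * H * (x ^ (-(n : ℤ))) + (1 - H ^ 2))) x := by
  have hx0 : x ≠ 0 := hx.ne'
  have h1 : HasDerivAt (fun x : ℝ => x ^ (1 - (n : ℤ)))
      (((1 - (n : ℤ)) : ℝ) * x ^ (1 - (n : ℤ) - 1)) x := by
    exact_mod_cast hasDerivAt_zpow (1 - (n : ℤ)) x (Or.inl hx0)
  have h2 : HasDerivAt (fun x : ℝ => H * x + x ^ (1 - (n : ℤ)))
      (H + ((1 - (n : ℤ)) : ℝ) * x ^ (1 - (n : ℤ) - 1)) x := by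
    exact (((hasDerivAt_id x).const_mul H).add h1).congr_deriv (by ring)
  have h3 := h2.pow 2
  have h5 := ((hasDerivAt_const x C).sub (hasDerivAt_pow 2 x)).add h3
  refine h5.congr_deriv ?_
  have e1 : x ^ (1 - (n : ℤ) - 1) = x ^ (-(n : ℤ)) := by
    congr 1; ring
  have e2 : x ^ (1 - (n : ℤ)) = x * x ^ (-(n : ℤ)) := by
    rw [show (1 - (n : ℤ)) = 1 + -(n : ℤ) by ring, zpow_add₀ hx0, zpow_one]
  rw [e1, e2]
  push_cast
  ring

lemma aux_F_anti (n : ℕ) (hn : 2 < n) (H : ℝ)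
    (hH₁ : -(2 * Real.sqrt ((n : ℝ) - 1) / (n : ℝ)) ≤ H) (hH₂ : H ≤ 1)
    (C : ℝ) {x y : ℝ} (hx : 0 < x) (hxy : x < y) :
    C - y ^ 2 + (H * y + y ^ (1 - (n : ℤ))) ^ 2 <
      C - x ^ 2 + (H * x + x ^ (1 - (n : ℤ))) ^ 2 := by
  set F : ℝ → ℝ := fun x => C - x ^ 2 + (H * x + x ^ (1 - (n : ℤ))) ^ 2 with hF
  have hder : ∀ z : ℝ, 0 < z → HasDerivAt F
      (-(2 * z) * (((n : ℝ) - 1) * (z ^ (-(n : ℤ))) ^ 2 +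
        ((n : ℝ) - 2) * H * (z ^ (-(n : ℤ))) + (1 - H ^ 2))) z :=
    fun z hz => aux_F_hasDeriv n H C z hz
  have hcont : ContinuousOn F (Set.Icc x y) := fun z hz =>
    ((hder z (lt_of_lt_of_le hx hz.1)).continuousAt).continuousWithinAt
  have hdiff : DifferentiableOn ℝ F (interior (Set.Icc x y)) := by
    rw [interior_Icc]
    exact fun z hz => ((hder z (hx.trans hz.1)).differentiableAt).differentiableWithinAt
  have hderiv_nonpos : ∀ z ∈ interior (Set.Icc x y), deriv F z ≤ 0 := by
    rw [interior_Icc]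
    intro z hz
    have hz0 : 0 < z := hx.trans hz.1
    rw [(hder z hz0).deriv]
    have hP := aux_P_nonneg n hn H hH₁ hH₂ (z ^ (-(n : ℤ))) (zpow_pos hz0 _)
    exact mul_nonpos_of_nonpos_of_nonneg (by linarith) hP
  have hmono : AntitoneOn F (Set.Icc x y) :=
    antitoneOn_of_deriv_nonpos (convex_Icc x y) hcont hdiff hderiv_nonpos
  have hxm : x ∈ Set.Icc x y := Set.left_mem_Icc.mpr hxy.le
  have hym : y ∈ Set.Icc x y := Set.right_mem_Icc.mpr hxy.le
  rcases lt_or_eq_of_le (hmono hxm hym hxy.le) with h | h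
  · exact h
  · exfalso
    have hconst : ∀ z ∈ Set.Icc x y, F z = F x := by
      intro z hz
      have h1 : F z ≤ F x := hmono hxm hz hz.1
      have h2 : F y ≤ F z := hmono hz hym hz.2
      linarith [h.ge]
    have hderiv0 : ∀ c : ℝ, x < c → c < y →
        ((n : ℝ) - 1) * (c ^ (-(n : ℤ))) ^ 2 +
          ((n : ℝ) - 2) * H * (c ^ (-(n : ℤ))) + (1 - H ^ 2) = 0 := by
      intro c h1 h2
      have hc0 : 0 < c := hx.trans h1
      have hev : F =ᶠ[nhds c] (fun _ => F x) := by
        filter_upwards [Ioo_mem_nhds h1 h2] with z hz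
        exact hconst z (Set.Ioo_subset_Icc_self hz)
      have hd : deriv F c = 0 := by rw [hev.deriv_eq, deriv_const]
      rw [(hder c hc0).deriv] at hd
      rcases mul_eq_zero.mp hd with h | h
      · exfalso; nlinarith
      · exact h
    set c₁ : ℝ := (2 * x + y) / 3 with hc₁def
    set c₂ : ℝ := (x + 2 * y) / 3 with hc₂def
    have hxc₁ : x < c₁ := by rw [hc₁def]; linarith
    have hc₁c₂ : c₁ < c₂ := by rw [hc₁def, hc₂def]; linarith
    have hc₂y : c₂ < y := by rw [hc₂def]; linarith
    have hc₁0 : 0 < c₁ := hx.trans hxc₁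
    have hc₂0 : 0 < c₂ := hc₁0.trans hc₁c₂
    have hu : c₂ ^ (-(n : ℤ)) < c₁ ^ (-(n : ℤ)) := by
      rw [zpow_neg, zpow_neg, zpow_natCast, zpow_natCast]
      exact inv_strictAnti₀ (pow_pos hc₁0 n)
        (pow_lt_pow_left₀ hc₁c₂ hc₁0.le (by omega))
    have h1 := hderiv0 c₁ hxc₁ (hc₁c₂.trans hc₂y)
    have h2 := hderiv0 c₂ (hxc₁.trans hc₁c₂) hc₂y
    rcases aux_P_key n hn H hH₁ hH₂ (c₂ ^ (-(n : ℤ))) (c₁ ^ (-(n : ℤ)))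
        (zpow_pos hc₂0 _) hu with h | h
    · rw [h2] at h; exact lt_irrefl 0 h
    · rw [h1] at h; exact lt_irrefl 0 h
open Set

/-- If `g` is a global positive solution of `g'² = F ∘ g` with `F` strictly
decreasing on positives, then `g'` cannot be negative anywhere. -/
lemma aux_no_descent (g F : ℝ → ℝ) (hg : Differentiable ℝ g) (hpos : ∀ t, 0 < g t)
    (heq : ∀ t, (deriv g t) ^ 2 = F (g t))
    (hanti : ∀ ⦃x y : ℝ⦄, 0 < x → x < y → F y < F x)
    (hcont : Continuous fun t => F (g t))
    (t₀ : ℝ) (h₀ : deriv g t₀ < 0) : False := by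
  have hF0 : 0 < F (g t₀) := by
    rw [← heq]
    exact lt_of_le_of_ne (sq_nonneg _) (Ne.symm (pow_ne_zero 2 h₀.ne))
  -- Darboux helper: no zero of `deriv g` strictly between a negative and positive value
  have darboux : ∀ a b : ℝ, a < b → deriv g a < 0 → 0 < deriv g b →
      ∃ c ∈ Ioo a b, deriv g c = 0 := by
    intro a b hab ha hb
    have hD : ∀ z ∈ Icc a b, HasDerivWithinAt g (deriv g z) (Icc a b) z :=
      fun z _ => (hg z).hasDerivAt.hasDerivWithinAt
    have := exists_hasDerivWithinAt_eq_of_gt_of_lt hab.le hD ha hb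
    obtain ⟨c, hc, hc0⟩ := this
    exact ⟨c, hc, hc0⟩
  -- Step 1: F (g t) ≠ 0 for all t ≥ t₀
  have step1 : ∀ t, t₀ ≤ t → F (g t) ≠ 0 := by
    by_contra hcon
    push_neg at hcon
    obtain ⟨t₁, ht₁, hz⟩ := hcon
    set S : Set ℝ := {t | t₀ ≤ t ∧ F (g t) = 0} with hS
    have hSne : S.Nonempty := ⟨t₁, ht₁, hz⟩
    have hSclosed : IsClosed S := by
      have : S = Ici t₀ ∩ (fun t => F (g t)) ⁻¹' {0} := by
        ext t; simp [hS, Set.mem_setOf_eq]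
      rw [this]
      exact isClosed_Ici.inter (isClosed_singleton.preimage hcont)
    have hSbdd : BddBelow S := ⟨t₀, fun t ht => ht.1⟩
    set s := sInf S with hs
    have hsS : s ∈ S := hSclosed.csInf_mem hSne hSbdd
    have hts : t₀ ≤ s := le_csInf hSne fun t ht => ht.1
    have hts' : t₀ < s := by
      rcases eq_or_lt_of_le hts with h | h
      · exact absurd (h ▸ hsS).2 hF0.ne'
      · exact h
    -- on [t₀, s), deriv g ≠ 0
    have hne : ∀ t, t₀ ≤ t → t < s → deriv g t ≠ 0 := by
      intro t h1 h2 h0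
      have : F (g t) = 0 := by rw [← heq, h0]; ring
      exact absurd (csInf_le hSbdd ⟨h1, this⟩) (not_le.mpr h2)
    -- deriv g < 0 on [t₀, s)
    have hneg : ∀ t, t₀ ≤ t → t < s → deriv g t < 0 := by
      intro t h1 h2
      rcases lt_trichotomy (deriv g t) 0 with h | h | h
      · exact h
      · exact absurd h (hne t h1 h2)
      · exfalso
        have h1' : t₀ < t := by
          rcases eq_or_lt_of_le h1 with rfl | h' 
          · linarith
          · exact h'
        obtain ⟨c, hc, hc0⟩ := darboux t₀ t h1' h₀ h
        exact hne c hc.1.le (hc.2.trans h2) hc0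
    -- g strictly decreasing on [t₀, s]
    have hanti' : StrictAntiOn g (Icc t₀ s) := by
      apply strictAntiOn_of_deriv_neg (convex_Icc _ _) hg.continuous.continuousOn
      intro z hz
      rw [interior_Icc] at hz
      exact hneg z hz.1.le hz.2
    have hlt : g s < g t₀ :=
      hanti' (Set.left_mem_Icc.mpr hts) (Set.right_mem_Icc.mpr hts) hts'
    have : F (g t₀) < F (g s) := hanti (hpos s) hlt
    exact absurd hsS.2 (by linarith)
  -- Step 2: deriv g < 0 on [t₀, ∞)
  have step2 : ∀ t, t₀ ≤ t → deriv g t < 0 := by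
    intro t ht
    have hne : deriv g t ≠ 0 := by
      intro h0
      exact step1 t ht (by rw [← heq, h0]; ring)
    rcases lt_or_gt_of_ne hne with h | h
    · exact h
    · exfalso
      have ht' : t₀ < t := by
        rcases eq_or_lt_of_le ht with rfl | h' 
        · linarith
        · exact h'
      obtain ⟨c, hc, hc0⟩ := darboux t₀ t ht' h₀ h
      have : F (g c) = 0 := by rw [← heq, hc0]; ring
      exact step1 c hc.1.le this
  -- g strictly decreasing on [t₀, ∞)
  have hanti' : StrictAntiOn g (Ici t₀) := by
    apply strictAntiOn_of_deriv_neg (convex_Ici _) hg.continuous.continuousOn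
    intro z hz
    rw [interior_Ici] at hz
    exact step2 z hz.le
  -- quantitative bound on the derivative
  set e := F (g t₀) with he
  have hse : 0 < Real.sqrt e := Real.sqrt_pos.mpr hF0
  have hbound : ∀ t, t₀ ≤ t → deriv g t ≤ -Real.sqrt e := by
    intro t ht
    have h2 : e ≤ (deriv g t) ^ 2 := by
      rcases eq_or_lt_of_le ht with rfl | h'
      · rw [heq]
      · have : g t < g t₀ := hanti' Set.self_mem_Ici (Set.mem_Ici.mpr ht) h'
        have := hanti (hpos t) this
        rw [heq]
        exact this.le
    have h3 : Real.sqrt e ≤ |deriv g t| := by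
      rw [← Real.sqrt_sq_eq_abs]
      exact Real.sqrt_le_sqrt h2
    rw [abs_of_neg (step2 t ht)] at h3
    linarith
  -- MVT contradiction
  set T := t₀ + g t₀ / Real.sqrt e + 1 with hT
  have hTt : t₀ < T := by
    have : 0 < g t₀ / Real.sqrt e := div_pos (hpos t₀) hse
    rw [hT]; linarith
  obtain ⟨c, hc, hslope⟩ := exists_deriv_eq_slope g hTt hg.continuous.continuousOn
    hg.differentiableOn
  have hcb := hbound c hc.1.le
  rw [hslope] at hcb
  have hTt0 : 0 < T - t₀ := by linarith
  have h5 : g T - g t₀ ≤ -Real.sqrt e * (T - t₀) := by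
    calc g T - g t₀ = (g T - g t₀) / (T - t₀) * (T - t₀) := by field_simp
      _ ≤ -Real.sqrt e * (T - t₀) := mul_le_mul_of_nonneg_right hcb hTt0.le
  have h6 : -Real.sqrt e * (T - t₀) = -(g t₀) - Real.sqrt e := by
    rw [hT]; field_simp; ring
  have := hpos T
  linarith [h5, h6 ▸ h5]

/-- Theorem 10.2 (1) (de Sitter case, a·d = 1, b·d = −1): if
`−2√(n−1)/n ≤ H ≤ 1` then there is no positive nonconstant global solution of
`g′² = C − g² + (H·g + g^(1−n))²`. -/
theorem stmt_14 (n : ℕ) (hn : 2 < n) (H : ℝ)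
    (hH₁ : -(2 * Real.sqrt ((n : ℝ) - 1) / (n : ℝ)) ≤ H) (hH₂ : H ≤ 1) :
    ∀ C : ℝ, ¬ ∃ g : ℝ → ℝ, Differentiable ℝ g ∧ (∀ t, 0 < g t) ∧
      (∃ t₁ t₂ : ℝ, g t₁ ≠ g t₂) ∧
      (∀ t : ℝ, (deriv g t) ^ 2 =
        C - (g t) ^ 2 + (H * g t + g t ^ (1 - (n : ℤ))) ^ 2) := by
  intro C
  rintro ⟨g, hg, hpos, ⟨t₁, t₂, hne⟩, heq⟩
  set F : ℝ → ℝ := fun x => C - x ^ 2 + (H * x + x ^ (1 - (n : ℤ))) ^ 2 with hF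
  have hanti : ∀ ⦃x y : ℝ⦄, 0 < x → x < y → F y < F x :=
    fun x y hx hxy => aux_F_anti n hn H hH₁ hH₂ C hx hxy
  have hgc := hg.continuous
  have hzc : Continuous fun t => (g t) ^ (1 - (n : ℤ)) :=
    hgc.zpow₀ _ (fun t => Or.inl (hpos t).ne')
  have hcont : Continuous fun t => F (g t) :=
    (continuous_const.sub (hgc.pow 2)).add
      (((continuous_const.mul hgc).add hzc).pow 2)
  have heq' : ∀ t, (deriv g t) ^ 2 = F (g t) := heq
  -- there is a point with nonzero derivative
  have hex : ∃ t₀, deriv g t₀ ≠ 0 := by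
    by_contra hcon
    push_neg at hcon
    exact hne (is_const_of_deriv_eq_zero hg hcon t₁ t₂)
  obtain ⟨t₀, ht₀⟩ := hex
  rcases lt_or_gt_of_ne ht₀ with h | h
  · exact aux_no_descent g F hg hpos heq' hanti hcont t₀ h
  · -- reflect time
    set g₁ : ℝ → ℝ := fun t => g (-t) with hg₁def
    have hg₁ : Differentiable ℝ g₁ := hg.comp differentiable_neg
    have hderiv₁ : ∀ t, deriv g₁ t = -deriv g (-t) := by
      intro t
      have h := ((hg (-t)).hasDerivAt.comp t (hasDerivAt_neg t))
      have := h.deriv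
      rw [mul_neg_one] at this
      exact this
    have heq₁ : ∀ t, (deriv g₁ t) ^ 2 = F (g₁ t) := by
      intro t
      calc (deriv g₁ t) ^ 2 = (deriv g (-t)) ^ 2 := by rw [hderiv₁ t]; ring
        _ = F (g (-t)) := heq' (-t)
    have hcont₁ : Continuous fun t => F (g₁ t) := hcont.comp continuous_neg
    have hneg : deriv g₁ (-t₀) < 0 := by
      rw [hderiv₁, neg_neg]
      linarith
    exact aux_no_descent g₁ F hg₁ (fun t => hpos (-t)) heq₁ hanti hcont₁ (-t₀) hneg
end

section
/- Let n > 2 be an integer, H > 1 and C ∈ ℝ. Let g : ℝ → ℝ be a twice differentiable, positive, nonconstant function satisfying g′(t)² = C + g(t)² − (H·g(t) + g(t)^(1−n))² and g″(t) = g(t)·(1 − κ₁(t)·κ₂(t)) for all t ∈ ℝ, where κ₁ = H + g^(−n) and κ₂ = H − (n−1)·g^(−n). Then C > r₁(H), where r₁(H) = n·(H·√E + (H² − 2)·n + 2) / (2^((n−2)/n) · (n−1)^(2(n−1)/n) · (√E − H·(n−2))^(2/n)) with E = H²·n² − 4n + 4, and g is periodic (there exists T > 0 with g(t+T) = g(t)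 for all t). -/
set_option maxHeartbeats 1000000

open Real Set Filter Topology


lemma key_alg (n : ℕ) (hn : 2 < n) (H : ℝ) (hH : 1 < H) (E r₁ : ℝ)
    (hE : E = H ^ 2 * (n : ℝ) ^ 2 - 4 * (n : ℝ) + 4)
    (hr₁ : r₁ = (n : ℝ) * (H * Real.sqrt E + (H ^ 2 - 2) * (n : ℝ) + 2) /
      ((2 : ℝ) ^ (((n : ℝ) - 2) / (n : ℝ))
        * ((n : ℝ) - 1) ^ (2 * ((n : ℝ) - 1) / (n : ℝ))
        * (Real.sqrt E - H * ((n : ℝ) - 2)) ^ (2 / (n : ℝ)))) :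
    ∃ y₀ : ℝ, 0 < y₀ ∧
      (H ^ 2 - 1) * y₀ ^ 2 - H * ((n : ℝ) - 2) * y₀ - ((n : ℝ) - 1) = 0 ∧
      y₀ ^ ((2 : ℝ) / (n : ℝ)) * ((H ^ 2 - 1) + 2 * H / y₀ + 1 / y₀ ^ 2) = r₁ := by
  subst hE
  have hn3 : (3 : ℝ) ≤ (n : ℝ) := by exact_mod_cast hn
  have hnpos : (0 : ℝ) < n := by linarith
  have hH2 : 0 < H ^ 2 - 1 := by nlinarith
  have hEpos : 0 < H ^ 2 * (n : ℝ) ^ 2 - 4 * (n : ℝ) + 4 := by nlinarith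
  set q := Real.sqrt (H ^ 2 * (n : ℝ) ^ 2 - 4 * (n : ℝ) + 4) with hq
  have hq2 : q ^ 2 = H ^ 2 * (n : ℝ) ^ 2 - 4 * (n : ℝ) + 4 := Real.sq_sqrt hEpos.le
  have hqpos : 0 < q := Real.sqrt_pos.mpr hEpos
  set s := q - H * ((n : ℝ) - 2) with hs
  have hkey : s * (q + H * ((n : ℝ) - 2)) = 4 * ((n : ℝ) - 1) * (H ^ 2 - 1) := by
    rw [hs]; nlinarith [hq2]
  have hsum : 0 < q + H * ((n : ℝ) - 2) := by nlinarith
  have hspos : 0 < s := by nlinarith [hkey]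
  set y₀ := 2 * ((n : ℝ) - 1) / s with hy₀
  have hy₀pos : 0 < y₀ := div_pos (by linarith) hspos
  have hy₀ne : y₀ ≠ 0 := ne_of_gt hy₀pos
  have hsne : s ≠ 0 := ne_of_gt hspos
  refine ⟨y₀, hy₀pos, ?_, ?_⟩
  · rw [hy₀]
    field_simp
    linear_combination (-((n:ℝ)-1)) * hq2
  · -- value identity
    have hBval : (H ^ 2 - 1) + 2 * H / y₀ + 1 / y₀ ^ 2
        = (n : ℝ) * (H * q + (H ^ 2 - 2) * (n : ℝ) + 2) / (2 * ((n : ℝ) - 1) ^ 2) := by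
      rw [hy₀]
      have hn1 : ((n:ℝ)-1) ≠ 0 := by linarith
      field_simp
      linear_combination hq2
    have e4 : y₀ ^ ((2:ℝ)/(n:ℝ))
        = (2:ℝ) ^ ((2:ℝ)/(n:ℝ)) * ((n:ℝ)-1) ^ ((2:ℝ)/(n:ℝ)) / s ^ ((2:ℝ)/(n:ℝ)) := by
      rw [hy₀, Real.div_rpow (by linarith) hspos.le, Real.mul_rpow (by norm_num) (by linarith)]
    have e2 : (2:ℝ) ^ ((2:ℝ)/(n:ℝ)) * (2:ℝ) ^ (((n:ℝ)-2)/(n:ℝ)) = 2 := by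
      rw [← Real.rpow_add two_pos, show (2:ℝ)/(n:ℝ) + ((n:ℝ)-2)/(n:ℝ) = 1 by
        field_simp; ring, Real.rpow_one]
    have e3 : ((n:ℝ)-1) ^ ((2:ℝ)/(n:ℝ)) * ((n:ℝ)-1) ^ (2*((n:ℝ)-1)/(n:ℝ)) = ((n:ℝ)-1) ^ 2 := by
      rw [← Real.rpow_add (by linarith), show (2:ℝ)/(n:ℝ) + 2*((n:ℝ)-1)/(n:ℝ) = 2 by
        field_simp; ring, show ((2:ℝ) : ℝ) = ((2:ℕ):ℝ) by norm_num, Real.rpow_natCast]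
    have hd1 : s ^ ((2:ℝ)/(n:ℝ)) * (2*((n:ℝ)-1)^2) ≠ 0 :=
      ne_of_gt (mul_pos (Real.rpow_pos_of_pos hspos _)
        (mul_pos two_pos (pow_pos (by linarith) 2)))
    have hd2 : (2:ℝ) ^ (((n:ℝ)-2)/(n:ℝ)) * ((n:ℝ)-1) ^ (2*((n:ℝ)-1)/(n:ℝ))
        * s ^ (2/(n:ℝ)) ≠ 0 :=
      ne_of_gt (mul_pos (mul_pos (Real.rpow_pos_of_pos two_pos _)
        (Real.rpow_pos_of_pos (by linarith) _)) (Real.rpow_pos_of_pos hspos _))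
    rw [hBval, e4, hr₁, div_mul_div_comm, div_eq_div_iff hd1 hd2]
    linear_combination ((n:ℝ) * (H * q + (H ^ 2 - 2) * (n : ℝ) + 2) * (s ^ ((2:ℝ)/(n:ℝ)))
        * (((n:ℝ)-1) ^ ((2:ℝ)/(n:ℝ)) * ((n:ℝ)-1) ^ (2*((n:ℝ)-1)/(n:ℝ)))) * e2
      + (2 * (n:ℝ) * (H * q + (H ^ 2 - 2) * (n : ℝ) + 2) * (s ^ ((2:ℝ)/(n:ℝ)))) * e3


lemma crit_val (n : ℕ) (hn : 2 < n) (H : ℝ) (hH : 1 < H) (r₁ y₀ : ℝ)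
    (hy₀pos : 0 < y₀)
    (hquad : (H ^ 2 - 1) * y₀ ^ 2 - H * ((n : ℝ) - 2) * y₀ - ((n : ℝ) - 1) = 0)
    (hval : y₀ ^ ((2 : ℝ) / (n : ℝ)) * ((H ^ 2 - 1) + 2 * H / y₀ + 1 / y₀ ^ 2) = r₁)
    (x : ℝ) (hx : 0 < x)
    (hρ : (1 - H ^ 2) * x + ((n : ℝ) - 2) * H * (x * (x ^ n)⁻¹)
        + ((n : ℝ) - 1) * (x * ((x ^ n)⁻¹) ^ 2) = 0) :
    (H ^ 2 - 1) * x ^ 2 + 2 * H * (x ^ 2 / x ^ n) + x ^ 2 / (x ^ n) ^ 2 = r₁ := by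
  have hn3 : (3 : ℝ) ≤ (n : ℝ) := by exact_mod_cast hn
  have hH2 : 0 < H ^ 2 - 1 := by nlinarith
  have hY : 0 < x ^ n := pow_pos hx n
  have hYne : x ^ n ≠ 0 := ne_of_gt hY
  have hxne : x ≠ 0 := ne_of_gt hx
  -- quadratic satisfied by Y = x^n
  have hq : (H ^ 2 - 1) * (x ^ n) ^ 2 - H * ((n : ℝ) - 2) * (x ^ n) - ((n : ℝ) - 1) = 0 := by
    have h2 := hρ
    field_simp at h2
    have h3 : (x * x ^ n) * ((H ^ 2 - 1) * (x ^ n) ^ 2 - H * ((n : ℝ) - 2) * (x ^ n)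
        - ((n : ℝ) - 1)) = 0 := by linear_combination (-(x ^ n)) * h2
    rcases mul_eq_zero.mp h3 with h | h
    · exact absurd h (by positivity)
    · exact h
  -- uniqueness of positive root
  have hfac : ((x ^ n) - y₀) * ((H ^ 2 - 1) * ((x ^ n) + y₀) - H * ((n : ℝ) - 2)) = 0 := by
    linear_combination hq - hquad
  have hfac2 : 0 < (H ^ 2 - 1) * ((x ^ n) + y₀) - H * ((n : ℝ) - 2) := by
    have h5 : ((H ^ 2 - 1) * ((x ^ n) + y₀) - H * ((n : ℝ) - 2)) * y₀
        = (H ^ 2 - 1) * x ^ n * y₀ + ((n : ℝ) - 1) := by linear_combination hquad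
    nlinarith [h5, mul_pos (mul_pos hH2 hY) hy₀pos, hy₀pos]
  have hYeq : x ^ n = y₀ := by
    rcases mul_eq_zero.mp hfac with h | h
    · linarith
    · linarith
  -- x^2 = y₀ ^ (2/n)
  have hx2 : (x : ℝ) ^ 2 = y₀ ^ ((2 : ℝ) / (n : ℝ)) := by
    rw [← hYeq, ← Real.rpow_natCast x n, ← Real.rpow_mul hx.le,
      show (n : ℝ) * (2 / (n : ℝ)) = 2 by field_simp,
      show (2 : ℝ) = ((2 : ℕ) : ℝ) by norm_num, Real.rpow_natCast]
  rw [hYeq] at *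
  rw [hx2, ← hval]
  have hy₀ne : y₀ ≠ 0 := ne_of_gt hy₀pos
  field_simp


lemma phi_ge (n : ℕ) (hn : 2 < n) (H : ℝ) (hH : 1 < H) (r₁ y₀ : ℝ)
    (hy₀pos : 0 < y₀)
    (hquad : (H ^ 2 - 1) * y₀ ^ 2 - H * ((n : ℝ) - 2) * y₀ - ((n : ℝ) - 1) = 0)
    (hval : y₀ ^ ((2 : ℝ) / (n : ℝ)) * ((H ^ 2 - 1) + 2 * H / y₀ + 1 / y₀ ^ 2) = r₁)
    (x : ℝ) (hx : 0 < x) :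
    r₁ ≤ (H ^ 2 - 1) * x ^ 2 + 2 * H * (x ^ 2 / x ^ n) + x ^ 2 / (x ^ n) ^ 2 := by
  have hn3 : (3 : ℝ) ≤ (n : ℝ) := by exact_mod_cast hn
  have hnne : (n : ℝ) ≠ 0 := by linarith
  have hH2 : 0 < H ^ 2 - 1 := by nlinarith
  have hy₀ne : y₀ ≠ 0 := ne_of_gt hy₀pos
  set L := Real.log y₀ with hL
  set u := (n : ℝ) * Real.log x with hu
  set w := u - L with hw
  set P := y₀ ^ ((2 : ℝ) / (n : ℝ)) with hPdef
  have hPpos : 0 < P := Real.rpow_pos_of_pos hy₀pos _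
  have hP : P = Real.exp ((2 / (n : ℝ)) * L) := by
    rw [hPdef, Real.rpow_def_of_pos hy₀pos, mul_comm]
  have hPy : P / y₀ = Real.exp (((2 - (n : ℝ)) / (n : ℝ)) * L) := by
    rw [hP, ← Real.exp_log hy₀pos, ← hL, ← Real.exp_sub]
    congr 1
    field_simp
  have hPy2 : P / y₀ ^ 2 = Real.exp (((2 - 2 * (n : ℝ)) / (n : ℝ)) * L) := by
    rw [hP]
    rw [show y₀ ^ 2 = Real.exp (2 * L) by
      rw [hL, ← Real.exp_log (pow_pos hy₀pos 2), Real.log_pow]; push_cast; ring_nf]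
    rw [← Real.exp_sub]
    congr 1
    field_simp
  have hex : ∀ m : ℕ, Real.exp ((m : ℝ) * Real.log x) = x ^ m := fun m => by
    rw [← Real.log_pow, Real.exp_log (pow_pos hx m)]
  -- decompositions
  have e1 : x ^ 2 = P * Real.exp ((2 / (n : ℝ)) * w) := by
    rw [hP, ← Real.exp_add, show 2 / (n : ℝ) * L + 2 / (n : ℝ) * w = ((2 : ℕ) : ℝ) * Real.log x by
      rw [hw, hu]; push_cast; field_simp; ring, hex 2]
  have e2 : x ^ 2 / x ^ n = (P / y₀) * Real.exp (((2 - (n : ℝ)) / (n : ℝ)) * w) := by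
    rw [hPy, ← Real.exp_add, ← hex 2, ← hex n, ← Real.exp_sub]
    congr 1
    rw [hw, hu]; push_cast; field_simp; ring
  have e3 : x ^ 2 / (x ^ n) ^ 2 = (P / y₀ ^ 2) * Real.exp (((2 - 2 * (n : ℝ)) / (n : ℝ)) * w) := by
    rw [hPy2, ← Real.exp_add, ← hex 2]
    rw [show (x ^ n) ^ 2 = Real.exp ((2 * (n : ℝ)) * Real.log x) by
      rw [← pow_mul, ← hex (n * 2)]; push_cast; ring_nf]
    rw [← Real.exp_sub]
    congr 1
    rw [hw, hu]; push_cast; field_simp; ring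
  -- value identity
  have hVal : P * (H ^ 2 - 1) + 2 * H * (P / y₀) + P / y₀ ^ 2 = r₁ := by
    rw [← hval]; field_simp
  -- critical identity
  have hCrit : (2 / (n : ℝ)) * (P * (H ^ 2 - 1)) + ((2 - (n : ℝ)) / (n : ℝ)) * (2 * H * (P / y₀))
      + ((2 - 2 * (n : ℝ)) / (n : ℝ)) * (P / y₀ ^ 2) = 0 := by
    have h7 : (2 / (n : ℝ)) * (P * (H ^ 2 - 1)) + ((2 - (n : ℝ)) / (n : ℝ)) * (2 * H * (P / y₀))
        + ((2 - 2 * (n : ℝ)) / (n : ℝ)) * (P / y₀ ^ 2)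
        = (2 * P / ((n : ℝ) * y₀ ^ 2))
          * ((H ^ 2 - 1) * y₀ ^ 2 - H * ((n : ℝ) - 2) * y₀ - ((n : ℝ) - 1)) := by
      field_simp
      ring
    rw [h7, hquad, mul_zero]
  have hCw : w * ((2 / (n : ℝ)) * (P * (H ^ 2 - 1))
      + ((2 - (n : ℝ)) / (n : ℝ)) * (2 * H * (P / y₀))
      + ((2 - 2 * (n : ℝ)) / (n : ℝ)) * (P / y₀ ^ 2)) = 0 := by rw [hCrit, mul_zero]
  -- tangent line inequalities
  have k1 : 1 + (2 / (n : ℝ)) * w ≤ Real.exp ((2 / (n : ℝ)) * w) := by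
    have := Real.add_one_le_exp ((2 / (n : ℝ)) * w); linarith
  have k2 : 1 + ((2 - (n : ℝ)) / (n : ℝ)) * w ≤ Real.exp (((2 - (n : ℝ)) / (n : ℝ)) * w) := by
    have := Real.add_one_le_exp (((2 - (n : ℝ)) / (n : ℝ)) * w); linarith
  have k3 : 1 + ((2 - 2 * (n : ℝ)) / (n : ℝ)) * w
      ≤ Real.exp (((2 - 2 * (n : ℝ)) / (n : ℝ)) * w) := by
    have := Real.add_one_le_exp (((2 - 2 * (n : ℝ)) / (n : ℝ)) * w); linarith
  rw [e3, e2, e1]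
  have c1 : 0 < P * (H ^ 2 - 1) := mul_pos hPpos hH2
  have c2 : 0 < 2 * H * (P / y₀) := by
    have h8 : 0 < P / y₀ := div_pos hPpos hy₀pos
    exact mul_pos (by linarith : (0:ℝ) < 2 * H) h8
  have c3 : 0 < P / y₀ ^ 2 := div_pos hPpos (pow_pos hy₀pos 2)
  set A1 := Real.exp ((2 / (n : ℝ)) * w) with hA1
  set A2 := Real.exp (((2 - (n : ℝ)) / (n : ℝ)) * w) with hA2
  set A3 := Real.exp (((2 - 2 * (n : ℝ)) / (n : ℝ)) * w) with hA3
  have hshape : (H ^ 2 - 1) * (P * A1) + 2 * H * (P / y₀ * A2) + P / y₀ ^ 2 * A3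
      = (P * (H ^ 2 - 1)) * A1 + (2 * H * (P / y₀)) * A2 + (P / y₀ ^ 2) * A3 := by ring
  rw [hshape]
  have key : r₁ = (P * (H ^ 2 - 1)) * (1 + (2 / (n : ℝ)) * w)
      + (2 * H * (P / y₀)) * (1 + ((2 - (n : ℝ)) / (n : ℝ)) * w)
      + (P / y₀ ^ 2) * (1 + ((2 - 2 * (n : ℝ)) / (n : ℝ)) * w) := by
    linear_combination (-1 : ℝ) * hVal - hCw
  rw [key]
  have t1 := mul_le_mul_of_nonneg_left k1 c1.le
  have t2 := mul_le_mul_of_nonneg_left k2 c2.le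
  have t3 := mul_le_mul_of_nonneg_left k3 c3.le
  exact add_le_add (add_le_add t1 t2) t3


lemma lip_aux (n : ℕ) (H δ M : ℝ) (hδ : 0 < δ) :
    ∃ K : NNReal, LipschitzOnWith K
      (fun x => (1 - H ^ 2) * x + ((n : ℝ) - 2) * H * (x * (x ^ n)⁻¹)
        + ((n : ℝ) - 1) * (x * ((x ^ n)⁻¹) ^ 2)) (Set.Icc δ M) := by
  set D : ℝ → ℝ := fun x => (1 - H ^ 2) * 1
      + ((n : ℝ) - 2) * H * (1 * (x ^ n)⁻¹ + x * (-(↑n * x ^ (n - 1)) / (x ^ n) ^ 2))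
      + ((n : ℝ) - 1) * (1 * ((x ^ n)⁻¹) ^ 2
        + x * (2 * ((x ^ n)⁻¹) ^ (2 - 1) * (-(↑n * x ^ (n - 1)) / (x ^ n) ^ 2))) with hD
  have hne : ∀ x ∈ Set.Icc δ M, x ≠ 0 := fun x hx => ne_of_gt (lt_of_lt_of_le hδ hx.1)
  have hder : ∀ x ∈ Set.Icc δ M, HasDerivAt
      (fun x => (1 - H ^ 2) * x + ((n : ℝ) - 2) * H * (x * (x ^ n)⁻¹)
        + ((n : ℝ) - 1) * (x * ((x ^ n)⁻¹) ^ 2)) (D x) x := by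
    intro x hx
    have hxn : x ^ n ≠ 0 := pow_ne_zero n (hne x hx)
    have h1 : HasDerivAt (fun x : ℝ => (x ^ n)⁻¹) (-(↑n * x ^ (n - 1)) / (x ^ n) ^ 2) x :=
      (hasDerivAt_pow n x).inv hxn
    have h2 := (hasDerivAt_id x).mul h1
    have h3 := (hasDerivAt_id x).mul (h1.pow 2)
    have h4 := ((hasDerivAt_id x).const_mul (1 - H ^ 2)).add
      ((h2.const_mul (((n : ℝ) - 2) * H)).add (h3.const_mul ((n : ℝ) - 1)))
    rw [hD]
    refine (h4.congr_deriv ?_).congr_of_eventuallyEq (Filter.Eventually.of_forall fun y => ?_)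
    · simp only [id_eq, Pi.pow_apply]; push_cast; ring
    · simp only [id_eq, Pi.add_apply, Pi.mul_apply, Pi.pow_apply]; ring
  have hcont : ContinuousOn D (Set.Icc δ M) := by
    rw [hD]
    apply ContinuousOn.add
    apply ContinuousOn.add
    · exact continuousOn_const
    · apply ContinuousOn.mul continuousOn_const
      apply ContinuousOn.add
      · exact continuousOn_const.mul ((continuousOn_pow n).inv₀ (fun x hx => pow_ne_zero n (hne x hx)))
      · exact (continuousOn_id).mul ((continuousOn_const.mul (continuousOn_pow (n-1))).neg.div
          ((continuousOn_pow n).pow 2) (fun x hx => pow_ne_zero 2 (pow_ne_zero n (hne x hx))))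
    · apply ContinuousOn.mul continuousOn_const
      apply ContinuousOn.add
      · exact continuousOn_const.mul (((continuousOn_pow n).inv₀
          (fun x hx => pow_ne_zero n (hne x hx))).pow 2)
      · exact (continuousOn_id).mul ((continuousOn_const.mul (((continuousOn_pow n).inv₀
          (fun x hx => pow_ne_zero n (hne x hx))).pow (2-1))).mul
          ((continuousOn_const.mul (continuousOn_pow (n-1))).neg.div
          ((continuousOn_pow n).pow 2) (fun x hx => pow_ne_zero 2 (pow_ne_zero n (hne x hx)))))
  obtain ⟨B, hB⟩ := (isCompact_Icc).exists_bound_of_continuousOn hcont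
  refine ⟨B.toNNReal, ?_⟩
  apply (convex_Icc δ M).lipschitzOnWith_of_nnnorm_hasDerivWithin_le
    (fun x hx => (hder x hx).hasDerivWithinAt)
  intro x hx
  rw [← NNReal.coe_le_coe, coe_nnnorm, Real.coe_toNNReal']
  exact le_trans (hB x hx) (le_max_left _ _)


lemma reflect (r : ℝ → ℝ) (δ M : ℝ)
    (K : NNReal) (hlip : LipschitzOnWith K r (Set.Icc δ M))
    (g : ℝ → ℝ) (hg : Differentiable ℝ g) (hg' : Differentiable ℝ (deriv g))
    (hrange : ∀ t, g t ∈ Set.Icc δ M)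
    (hode2 : ∀ t, deriv (deriv g) t = r (g t))
    (c : ℝ) (hc : deriv g c = 0) : ∀ t : ℝ, g (2 * c - t) = g t := by
  set v : ℝ → ℝ × ℝ → ℝ × ℝ := fun _ p => (p.2, r p.1) with hv
  set s : ℝ → Set (ℝ × ℝ) := fun _ => Set.Icc δ M ×ˢ (Set.univ : Set ℝ) with hs
  have hvlip : ∀ t, LipschitzOnWith (max 1 K) (v t) (s t) := by
    intro t
    apply LipschitzOnWith.of_dist_le_mul
    intro p hp q hq
    rw [Prod.dist_eq]
    rcases hp with ⟨hp1, -⟩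
    rcases hq with ⟨hq1, -⟩
    have hfst : dist p.1 q.1 ≤ dist p q := by rw [Prod.dist_eq]; exact le_max_left _ _
    have hsnd : dist p.2 q.2 ≤ dist p q := by rw [Prod.dist_eq]; exact le_max_right _ _
    apply max_le
    · calc dist (v t p).1 (v t q).1 = dist p.2 q.2 := rfl
        _ ≤ dist p q := hsnd
        _ ≤ (max 1 K : NNReal) * dist p q := by
            apply le_mul_of_one_le_left dist_nonneg
            rw [show ((max 1 K : NNReal) : ℝ) = max 1 (K : ℝ) by push_cast; rfl]
            exact le_max_left _ _
    · calc dist (v t p).2 (v t q).2 = dist (r p.1) (r q.1) := rfl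
        _ ≤ K * dist p.1 q.1 := hlip.dist_le_mul p.1 hp1 q.1 hq1
        _ ≤ K * dist p q := by
            apply mul_le_mul_of_nonneg_left hfst (K.coe_nonneg)
        _ ≤ (max 1 K : NNReal) * dist p q := by
            apply mul_le_mul_of_nonneg_right _ dist_nonneg
            rw [show ((max 1 K : NNReal) : ℝ) = max 1 (K : ℝ) by push_cast; rfl]
            exact le_max_right _ _
  set u : ℝ → ℝ × ℝ := fun t => (g t, deriv g t) with hu
  set w : ℝ → ℝ × ℝ := fun t => (g (2 * c - t), -deriv g (2 * c - t)) with hw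
  have hu' : ∀ t, HasDerivAt u (v t (u t)) t := by
    intro t
    apply HasDerivAt.prodMk
    · exact (hg t).hasDerivAt
    · show HasDerivAt (deriv g) (r (g t)) t
      rw [← hode2 t]
      exact (hg' t).hasDerivAt
  have hinner : ∀ t : ℝ, HasDerivAt (fun t : ℝ => 2 * c - t) (-1) t := by
    intro t
    simpa using (hasDerivAt_id t).const_sub (2 * c)
  have hw' : ∀ t, HasDerivAt w (v t (w t)) t := by
    intro t
    apply HasDerivAt.prodMk
    · have h5 := ((hg (2 * c - t)).hasDerivAt.comp t (hinner t))
      show HasDerivAt (fun x => g (2 * c - x)) (-deriv g (2 * c - t)) t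
      exact h5.congr_deriv (by ring)
    · have h6 := (((hg' (2 * c - t)).hasDerivAt.comp t (hinner t))).neg
      show HasDerivAt (fun x => -deriv g (2 * c - x)) (r (g (2 * c - t))) t
      rw [← hode2 (2 * c - t)]
      exact h6.congr_deriv (by ring)
  intro t
  have hmem : t ∈ Set.Ioo (c - (|t - c| + 1)) (c + (|t - c| + 1)) := by
    constructor
    · have := abs_nonneg (t - c); have := le_abs_self (t - c); have := neg_abs_le (t - c); linarith
    · have := le_abs_self (t - c); linarith
  have hcmem : c ∈ Set.Ioo (c - (|t - c| + 1)) (c + (|t - c| + 1)) := by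
    constructor <;> · have := abs_nonneg (t - c); linarith
  have := ODE_solution_unique_of_mem_Ioo (fun t _ => hvlip t) hcmem
    (f := u) (g := w) ?_ ?_ ?_
  · have h7 := this hmem
    have : (u t).1 = (w t).1 := by rw [h7]
    simpa [hu, hw] using this.symm
  · intro τ _
    exact ⟨hu' τ, ⟨hrange τ, trivial⟩⟩
  · intro τ _
    exact ⟨hw' τ, ⟨hrange _, trivial⟩⟩
  · rw [hu, hw]
    simp only
    rw [show 2 * c - c = c by ring, hc, neg_zero]

/-- Theorem 10.1 (8) (hyperbolic case, a = −1, b = d = 1, H > 1): a positive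
nonconstant global solution of `g′² = C + g² − (H·g + g^(1−n))²` with
`g″ = g·(1 − κ₁·κ₂)` forces `C > r₁(H)` and `g` periodic, where
`E = H²n² − 4n + 4` and
`r₁(H) = n(H√E + (H² − 2)n + 2)/(2^((n−2)/n)·(n−1)^(2(n−1)/n)·(√E − H(n−2))^(2/n))`. -/
theorem stmt_16 (n : ℕ) (hn : 2 < n) (H C : ℝ) (hH : 1 < H)
    (g : ℝ → ℝ) (hgpos : ∀ t, 0 < g t)
    (hg : Differentiable ℝ g) (hg' : Differentiable ℝ (deriv g))
    (hgnc : ∃ t₁ t₂ : ℝ, g t₁ ≠ g t₂)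
    (κ₁ κ₂ : ℝ → ℝ)
    (hκ₁ : ∀ t, κ₁ t = H + g t ^ (-(n : ℤ)))
    (hκ₂ : ∀ t, κ₂ t = H - ((n : ℝ) - 1) * g t ^ (-(n : ℤ)))
    (hode : ∀ t : ℝ, (deriv g t) ^ 2 =
      C + (g t) ^ 2 - (H * g t + g t ^ (1 - (n : ℤ))) ^ 2)
    (hode2 : ∀ t : ℝ, deriv (deriv g) t = g t * (1 - κ₁ t * κ₂ t))
    (E : ℝ) (hE : E = H ^ 2 * (n : ℝ) ^ 2 - 4 * (n : ℝ) + 4)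
    (r₁ : ℝ)
    (hr₁ : r₁ = (n : ℝ) * (H * Real.sqrt E + (H ^ 2 - 2) * (n : ℝ) + 2) /
      ((2 : ℝ) ^ (((n : ℝ) - 2) / (n : ℝ))
        * ((n : ℝ) - 1) ^ (2 * ((n : ℝ) - 1) / (n : ℝ))
        * (Real.sqrt E - H * ((n : ℝ) - 2)) ^ (2 / (n : ℝ)))) :
    C > r₁ ∧ ∃ T : ℝ, 0 < T ∧ ∀ t : ℝ, g (t + T) = g t := by
  have hn3 : (3 : ℝ) ≤ (n : ℝ) := by exact_mod_cast hn
  have hH0 : 0 < H := by linarith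
  have hH2 : 0 < H ^ 2 - 1 := by nlinarith
  obtain ⟨y₀, hy₀pos, hquad, hval⟩ := key_alg n hn H hH E r₁ hE hr₁
  -- φ-form of the first-order ODE
  have hodeφ : ∀ t, (deriv g t) ^ 2 = C - ((H ^ 2 - 1) * (g t) ^ 2
      + 2 * H * ((g t) ^ 2 / (g t) ^ n) + (g t) ^ 2 / ((g t) ^ n) ^ 2) := by
    intro t
    have hx := hgpos t
    have hxne : g t ≠ 0 := ne_of_gt hx
    have hzp : g t ^ (1 - (n : ℤ)) = g t / g t ^ n := by
      rw [zpow_sub₀ hxne, zpow_one, zpow_natCast]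
    rw [hode t, hzp]
    have hxn : (g t) ^ n ≠ 0 := pow_ne_zero n hxne
    field_simp
    ring
  -- ρ-form of the second-order ODE
  have hρg : ∀ t, deriv (deriv g) t = (1 - H ^ 2) * g t
      + ((n : ℝ) - 2) * H * (g t * ((g t) ^ n)⁻¹)
      + ((n : ℝ) - 1) * (g t * (((g t) ^ n)⁻¹) ^ 2) := by
    intro t
    have hxne : g t ≠ 0 := ne_of_gt (hgpos t)
    rw [hode2 t, hκ₁ t, hκ₂ t, zpow_neg, zpow_natCast]
    ring
  -- positivity of φ, and φ ≤ C
  have hφpos : ∀ x : ℝ, 0 < x → 0 < (H ^ 2 - 1) * x ^ 2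
      + 2 * H * (x ^ 2 / x ^ n) + x ^ 2 / (x ^ n) ^ 2 := by
    intro x hx
    have h1 : 0 < (H ^ 2 - 1) * x ^ 2 := mul_pos hH2 (pow_pos hx 2)
    have h2 : 0 < 2 * H * (x ^ 2 / x ^ n) :=
      mul_pos (by linarith) (div_pos (pow_pos hx 2) (pow_pos hx n))
    have h3 : 0 < x ^ 2 / (x ^ n) ^ 2 := div_pos (pow_pos hx 2) (pow_pos (pow_pos hx n) 2)
    linarith
  have hφle : ∀ t, (H ^ 2 - 1) * (g t) ^ 2 + 2 * H * ((g t) ^ 2 / (g t) ^ n)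
      + (g t) ^ 2 / ((g t) ^ n) ^ 2 ≤ C := by
    intro t
    have h1 := hodeφ t
    nlinarith [sq_nonneg (deriv g t)]
  have hC0 : 0 < C := lt_of_lt_of_le (hφpos (g 0) (hgpos 0)) (hφle 0)
  -- Part A : C > r₁
  have hCr : r₁ < C := by
    obtain ⟨t₁, t₂, hne⟩ := hgnc
    have hne' : t₁ ≠ t₂ := fun h => hne (by rw [h])
    obtain ⟨a, b, hab, hgab⟩ : ∃ a b : ℝ, a < b ∧ g a ≠ g b := by
      rcases lt_or_gt_of_ne hne' with h | h
      · exact ⟨t₁, t₂, h, hne⟩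
      · exact ⟨t₂, t₁, h, fun hh => hne hh.symm⟩
    obtain ⟨c, _, hc⟩ := exists_hasDerivAt_eq_slope g (deriv g) hab
      (hg.continuous.continuousOn) (fun x _ => (hg x).hasDerivAt)
    have hcne : deriv g c ≠ 0 := by
      rw [hc]
      exact div_ne_zero (sub_ne_zero.mpr (fun hh => hgab hh.symm)) (ne_of_gt (by linarith))
    have h2 : 0 < (deriv g c) ^ 2 := by positivity
    have h3 := hodeφ c
    have h4 := phi_ge n hn H hH r₁ y₀ hy₀pos hquad hval (g c) (hgpos c)
    linarith
  refine ⟨hCr, ?_⟩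
  -- bounds on g
  obtain ⟨M, hM⟩ : ∃ m : ℝ, m = Real.sqrt (C / (H ^ 2 - 1)) := ⟨_, rfl⟩
  have hgM : ∀ t, g t ≤ M := by
    intro t
    have h1 : (H ^ 2 - 1) * (g t) ^ 2 ≤ C := by
      have h2 : 0 < 2 * H * ((g t) ^ 2 / (g t) ^ n) :=
        mul_pos (by linarith) (div_pos (pow_pos (hgpos t) 2) (pow_pos (hgpos t) n))
      have h3 : 0 < (g t) ^ 2 / ((g t) ^ n) ^ 2 :=
        div_pos (pow_pos (hgpos t) 2) (pow_pos (pow_pos (hgpos t) n) 2)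
      linarith [hφle t]
    rw [hM]
    rw [show C / (H ^ 2 - 1) = (C / (H ^ 2 - 1)) by rfl]
    have h5 : (g t) ^ 2 ≤ C / (H ^ 2 - 1) := by
      rw [le_div_iff₀ hH2]; linarith
    calc g t = Real.sqrt ((g t) ^ 2) := (Real.sqrt_sq (hgpos t).le).symm
      _ ≤ Real.sqrt (C / (H ^ 2 - 1)) := Real.sqrt_le_sqrt h5
  obtain ⟨δ, hδdef⟩ : ∃ d : ℝ, d = min 1 C⁻¹ := ⟨_, rfl⟩
  have hδ : 0 < δ := hδdef ▸ lt_min one_pos (inv_pos.mpr hC0)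
  have hgδ : ∀ t, δ ≤ g t := by
    intro t
    rw [hδdef]
    rcases le_or_gt 1 (g t) with h | h
    · exact le_trans (min_le_left _ _) h
    · have hx := hgpos t
      have h9 : (g t) ^ 2 / ((g t) ^ n) ^ 2 ≤ C := by
        have h2 : 0 < (H ^ 2 - 1) * (g t) ^ 2 := mul_pos hH2 (pow_pos hx 2)
        have h3 : 0 < 2 * H * ((g t) ^ 2 / (g t) ^ n) :=
          mul_pos (by linarith) (div_pos (pow_pos hx 2) (pow_pos hx n))
        linarith [hφle t]
      have h10 : ((g t) ^ n) ^ 2 = (g t) ^ (2 * n - 2) * (g t) ^ 2 := by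
        rw [← pow_mul, ← pow_add]
        congr 1
        omega
      have h11 : (g t) ^ 2 / ((g t) ^ n) ^ 2 = ((g t) ^ (2 * n - 2))⁻¹ := by
        rw [h10]
        field_simp
      rw [h11] at h9
      have h12 : C⁻¹ ≤ (g t) ^ (2 * n - 2) := by
        have h13 : 0 < ((g t) ^ (2 * n - 2))⁻¹ := inv_pos.mpr (pow_pos hx _)
        calc C⁻¹ ≤ (((g t) ^ (2 * n - 2))⁻¹)⁻¹ := by
              apply inv_anti₀ h13 h9
          _ = (g t) ^ (2 * n - 2) := inv_inv _
      have h14 : (g t) ^ (2 * n - 2) ≤ g t := by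
        calc (g t) ^ (2 * n - 2) ≤ (g t) ^ 1 := by
              apply pow_le_pow_of_le_one hx.le h.le
              omega
          _ = g t := pow_one _
      exact le_trans (min_le_right _ _) (le_trans h12 h14)
  have hrange : ∀ t, g t ∈ Set.Icc δ M := fun t => ⟨hgδ t, hgM t⟩
  have hδM : δ ≤ M := le_trans (hgδ 0) (hgM 0)
  have hd2 : ∀ t, (deriv g t) ^ 2 ≤ C := by
    intro t
    have := hodeφ t
    linarith [hφpos (g t) (hgpos t)]
  have hn3 : (3 : ℝ) ≤ (n : ℝ) := by exact_mod_cast hn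
  have hH2 : 0 < H ^ 2 - 1 := by nlinarith
  have hsqC : ∀ t, deriv g t ≤ Real.sqrt C ∧ -Real.sqrt C ≤ deriv g t := by
    intro t
    have h1 := hd2 t
    have h2 : Real.sqrt C ^ 2 = C := Real.sq_sqrt hC0.le
    constructor <;> nlinarith [Real.sqrt_nonneg C]
  have hδM : δ ≤ M := le_trans (hgδ 0) (hgM 0)
  have hslope : ∀ a b : ℝ, a < b → ∃ c ∈ Set.Ioo a b, deriv g c = (g b - g a) / (b - a) :=
    fun a b hab => exists_hasDerivAt_eq_slope g (deriv g) hab hg.continuous.continuousOn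
      (fun x _ => (hg x).hasDerivAt)
  have hslope' : ∀ a b : ℝ, a < b → ∃ c ∈ Set.Ioo a b,
      deriv (deriv g) c = (deriv g b - deriv g a) / (b - a) :=
    fun a b hab => exists_hasDerivAt_eq_slope (deriv g) (deriv (deriv g)) hab
      hg'.continuous.continuousOn (fun x _ => (hg' x).hasDerivAt)
  -- growth helpers
  have hgrow : ∀ ε : ℝ, 0 < ε → ∀ T : ℝ, ¬ (∀ t, T ≤ t → ε ≤ deriv g t) := by
    intro ε hε T hT
    obtain ⟨b, hb⟩ : ∃ b : ℝ, b = T + (M - δ) / ε + 1 := ⟨_, rfl⟩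
    have hTb : T < b := by
      have h1 : 0 ≤ (M - δ) / ε := div_nonneg (by linarith) hε.le
      rw [hb]; linarith
    obtain ⟨c, hc, hceq⟩ := hslope T b hTb
    have h1 : ε ≤ deriv g c := hT c hc.1.le
    have h2 : g b - g T = deriv g c * (b - T) := by
      rw [hceq, div_mul_cancel₀ _ (by linarith : b - T ≠ 0)]
    have h3 : ε * (b - T) = (M - δ) + ε := by
      rw [hb]; field_simp; ring
    have h4 : ε * (b - T) ≤ deriv g c * (b - T) :=
      mul_le_mul_of_nonneg_right h1 (by linarith)
    have := hgM b
    have := hgδ T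
    linarith
  have hgrow' : ∀ ε : ℝ, 0 < ε → ∀ T : ℝ, ¬ (∀ t, T ≤ t → deriv g t ≤ -ε) := by
    intro ε hε T hT
    obtain ⟨b, hb⟩ : ∃ b : ℝ, b = T + (M - δ) / ε + 1 := ⟨_, rfl⟩
    have hTb : T < b := by
      have h1 : 0 ≤ (M - δ) / ε := div_nonneg (by linarith) hε.le
      rw [hb]; linarith
    obtain ⟨c, hc, hceq⟩ := hslope T b hTb
    have h1 : deriv g c ≤ -ε := hT c hc.1.le
    have h2 : g b - g T = deriv g c * (b - T) := by
      rw [hceq, div_mul_cancel₀ _ (by linarith : b - T ≠ 0)]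
    have h3 : ε * (b - T) = (M - δ) + ε := by
      rw [hb]; field_simp; ring
    have h4 : deriv g c * (b - T) ≤ (-ε) * (b - T) :=
      mul_le_mul_of_nonneg_right h1 (by linarith)
    have := hgM T
    have := hgδ b
    nlinarith
  have hblow : ∀ ε : ℝ, 0 < ε → ∀ T : ℝ, ¬ (∀ t, T ≤ t → ε ≤ deriv (deriv g) t) := by
    intro ε hε T hT
    obtain ⟨b, hb⟩ : ∃ b : ℝ, b = T + 2 * Real.sqrt C / ε + 1 := ⟨_, rfl⟩
    have hTb : T < b := by
      have h1 : 0 ≤ 2 * Real.sqrt C / ε := div_nonneg (by positivity) hε.le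
      rw [hb]; linarith
    obtain ⟨c, hc, hceq⟩ := hslope' T b hTb
    have h1 : ε ≤ deriv (deriv g) c := hT c hc.1.le
    have h2 : deriv g b - deriv g T = deriv (deriv g) c * (b - T) := by
      rw [hceq, div_mul_cancel₀ _ (by linarith : b - T ≠ 0)]
    have h3 : ε * (b - T) = 2 * Real.sqrt C + ε := by
      rw [hb]; field_simp; ring
    have h4 : ε * (b - T) ≤ deriv (deriv g) c * (b - T) :=
      mul_le_mul_of_nonneg_right h1 (by linarith)
    have := (hsqC b).1
    have := (hsqC T).2
    linarith
  have hblow' : ∀ ε : ℝ, 0 < ε → ∀ T : ℝ, ¬ (∀ t, T ≤ t → deriv (deriv g) t ≤ -ε) := by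
    intro ε hε T hT
    obtain ⟨b, hb⟩ : ∃ b : ℝ, b = T + 2 * Real.sqrt C / ε + 1 := ⟨_, rfl⟩
    have hTb : T < b := by
      have h1 : 0 ≤ 2 * Real.sqrt C / ε := div_nonneg (by positivity) hε.le
      rw [hb]; linarith
    obtain ⟨c, hc, hceq⟩ := hslope' T b hTb
    have h1 : deriv (deriv g) c ≤ -ε := hT c hc.1.le
    have h2 : deriv g b - deriv g T = deriv (deriv g) c * (b - T) := by
      rw [hceq, div_mul_cancel₀ _ (by linarith : b - T ≠ 0)]
    have h3 : ε * (b - T) = 2 * Real.sqrt C + ε := by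
      rw [hb]; field_simp; ring
    have h4 : deriv (deriv g) c * (b - T) ≤ (-ε) * (b - T) :=
      mul_le_mul_of_nonneg_right h1 (by linarith)
    have := (hsqC b).2
    have := (hsqC T).1
    nlinarith
  -- existence of zeros of deriv g beyond any point
  have hzero : ∀ a : ℝ, ∃ t, a < t ∧ deriv g t = 0 := by
    intro a
    by_contra hcon
    push_neg at hcon
    have hcontd : Continuous (deriv g) := hg'.continuous
    -- sign dichotomy
    have hsign : (∀ t, a < t → 0 < deriv g t) ∨ (∀ t, a < t → deriv g t < 0) := by
      by_contra hs
      push_neg at hs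
      obtain ⟨⟨u, hu, hu0⟩, ⟨v, hv, hv0⟩⟩ := hs
      have hu0' : deriv g u < 0 := lt_of_le_of_ne hu0 (hcon u hu)
      have hv0' : 0 < deriv g v := lt_of_le_of_ne hv0 (Ne.symm (hcon v hv))
      have h0mem : (0 : ℝ) ∈ Set.uIcc (deriv g u) (deriv g v) := by
        rw [Set.mem_uIcc]; left; exact ⟨hu0'.le, hv0'.le⟩
      obtain ⟨c, hcmem, hc0⟩ := intermediate_value_uIcc
        (hcontd.continuousOn (s := Set.uIcc u v)) h0mem
      have hca : a < c := by
        rcases Set.mem_uIcc.mp hcmem with h | h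
        · linarith [h.1]
        · linarith [h.1]
      exact hcon c hca hc0
    -- the limit ℓ and contradiction; factor the common part
    have hlimit : ∀ ℓ : ℝ, Filter.Tendsto g Filter.atTop (𝓝 ℓ) → False := by
      intro ℓ htg
      have hℓδ : δ ≤ ℓ := ge_of_tendsto htg (Filter.Eventually.of_forall hgδ)
      have hℓpos : 0 < ℓ := lt_of_lt_of_le hδ hℓδ
      have hℓn : (ℓ : ℝ) ^ n ≠ 0 := pow_ne_zero n (ne_of_gt hℓpos)
      have c1 : ContinuousAt (fun x : ℝ => x ^ 2) ℓ := (continuous_pow 2).continuousAt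
      have cn : ContinuousAt (fun x : ℝ => x ^ n) ℓ := (continuous_pow n).continuousAt
      have hφcont : ContinuousAt (fun x : ℝ => (H ^ 2 - 1) * x ^ 2
          + 2 * H * (x ^ 2 / x ^ n) + x ^ 2 / (x ^ n) ^ 2) ℓ := by
        exact ((continuousAt_const.mul c1).add
          (continuousAt_const.mul (c1.div cn hℓn))).add
          (c1.div (cn.pow 2) (pow_ne_zero 2 hℓn))
      have hsq : Filter.Tendsto (fun t => (deriv g t) ^ 2) Filter.atTop
          (𝓝 (C - ((H ^ 2 - 1) * ℓ ^ 2 + 2 * H * (ℓ ^ 2 / ℓ ^ n) + ℓ ^ 2 / (ℓ ^ n) ^ 2))) := by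
        have h5 := (tendsto_const_nhds (x := C)).sub (hφcont.tendsto.comp htg)
        exact h5.congr fun t => (hodeφ t).symm
      obtain ⟨V, hV⟩ : ∃ V : ℝ, V = C - ((H ^ 2 - 1) * ℓ ^ 2 + 2 * H * (ℓ ^ 2 / ℓ ^ n)
        + ℓ ^ 2 / (ℓ ^ n) ^ 2) := ⟨_, rfl⟩
      rw [← hV] at hsq
      have hV0 : 0 ≤ V := ge_of_tendsto hsq (Filter.Eventually.of_forall fun t => sq_nonneg _)
      rcases hV0.lt_or_eq with hVpos | hVzero
      · -- V > 0 : |deriv g| bounded below, fixed sign, so g escapes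
        obtain ⟨ε, hεdef⟩ : ∃ e : ℝ, e = Real.sqrt (V / 2) := ⟨_, rfl⟩
        have hεpos : 0 < ε := hεdef ▸ Real.sqrt_pos.mpr (by linarith)
        have hε2 : ε ^ 2 = V / 2 := by rw [hεdef]; exact Real.sq_sqrt (by linarith)
        have hev : ∀ᶠ t in Filter.atTop, V / 2 < (deriv g t) ^ 2 :=
          hsq.eventually_const_lt (by linarith)
        obtain ⟨T, hT⟩ := Filter.eventually_atTop.mp hev
        rcases hsign with hpos | hneg
        · apply hgrow ε hεpos (max T (a + 1))
          intro t ht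
          have h1 : V / 2 < (deriv g t) ^ 2 := hT t (le_trans (le_max_left _ _) ht)
          have h2 : 0 < deriv g t := hpos t (by
            have := le_max_right T (a + 1); linarith)
          by_contra hlt
          push_neg at hlt
          have h3 : (deriv g t) ^ 2 < ε ^ 2 := by
            apply pow_lt_pow_left₀ hlt h2.le
            norm_num
          linarith
        · apply hgrow' ε hεpos (max T (a + 1))
          intro t ht
          have h1 : V / 2 < (deriv g t) ^ 2 := hT t (le_trans (le_max_left _ _) ht)
          have h2 : deriv g t < 0 := hneg t (by
            have := le_max_right T (a + 1); linarith)
          by_contra hlt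
          push_neg at hlt
          have h3 : (-(deriv g t)) ^ 2 < ε ^ 2 := by
            apply pow_lt_pow_left₀ (by linarith) (by linarith)
            norm_num
          have h4 : (-(deriv g t)) ^ 2 = (deriv g t) ^ 2 := by ring
          linarith
      · -- V = 0 : second derivative has a nonzero limit
        have hφℓC : (H ^ 2 - 1) * ℓ ^ 2 + 2 * H * (ℓ ^ 2 / ℓ ^ n) + ℓ ^ 2 / (ℓ ^ n) ^ 2 = C := by
          rw [hV] at hVzero; linarith
        have hρcont : ContinuousAt (fun x : ℝ => (1 - H ^ 2) * x
            + ((n : ℝ) - 2) * H * (x * (x ^ n)⁻¹)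
            + ((n : ℝ) - 1) * (x * ((x ^ n)⁻¹) ^ 2)) ℓ := by
          have ci : ContinuousAt (fun x : ℝ => x) ℓ := continuousAt_id
          have cinv : ContinuousAt (fun x : ℝ => (x ^ n)⁻¹) ℓ := cn.inv₀ hℓn
          exact ((continuousAt_const.mul ci).add
            (continuousAt_const.mul (ci.mul cinv))).add
            (continuousAt_const.mul (ci.mul (cinv.pow 2)))
        obtain ⟨ρℓ, hρℓdef⟩ : ∃ z : ℝ, z = (1 - H ^ 2) * ℓ + ((n : ℝ) - 2) * H * (ℓ * (ℓ ^ n)⁻¹)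
          + ((n : ℝ) - 1) * (ℓ * ((ℓ ^ n)⁻¹) ^ 2) := ⟨_, rfl⟩
        have hρℓne : ρℓ ≠ 0 := by
          intro h0
          rw [hρℓdef] at h0
          have h6 := crit_val n hn H hH r₁ y₀ hy₀pos hquad hval ℓ hℓpos h0
          linarith
        have hd2t : Filter.Tendsto (deriv (deriv g)) Filter.atTop (𝓝 ρℓ) := by
          rw [hρℓdef]
          exact (hρcont.tendsto.comp htg).congr fun t => (hρg t).symm
        rcases hρℓne.lt_or_gt with hneg2 | hpos2
        · have hev : ∀ᶠ t in Filter.atTop, deriv (deriv g) t < ρℓ / 2 :=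
            hd2t.eventually_lt_const (by linarith)
          obtain ⟨T, hT⟩ := Filter.eventually_atTop.mp hev
          apply hblow' (-(ρℓ / 2)) (by linarith) T
          intro t ht
          have := hT t ht
          linarith
        · have hev : ∀ᶠ t in Filter.atTop, ρℓ / 2 < deriv (deriv g) t :=
            hd2t.eventually_const_lt (by linarith)
          obtain ⟨T, hT⟩ := Filter.eventually_atTop.mp hev
          apply hblow (ρℓ / 2) (by linarith) T
          intro t ht
          exact (hT t ht).le
    -- construct the limit from the monotone tail
    rcases hsign with hpos | hneg
    · have hmono : StrictMonoOn g (Set.Ici (a + 1)) := by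
        apply strictMonoOn_of_deriv_pos (convex_Ici _) hg.continuous.continuousOn
        intro t ht
        rw [interior_Ici] at ht
        exact hpos t (by have := Set.mem_Ioi.mp ht; linarith)
      have hGmono : Monotone (fun t : ℝ => g (max t (a + 1))) := by
        intro s t hst
        exact (hmono.monotoneOn) (Set.mem_Ici.mpr (le_max_right _ _)) (Set.mem_Ici.mpr (le_max_right _ _))
          (max_le_max hst le_rfl)
      rcases tendsto_of_monotone hGmono with hdiv | ⟨ℓ, hℓ⟩
      · obtain ⟨t, ht⟩ := (hdiv.eventually_ge_atTop (M + 1)).exists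
        have h20 := hgM (max t (a + 1))
        have ht' : M + 1 ≤ g (max t (a + 1)) := ht
        linarith
      · apply hlimit ℓ
        apply hℓ.congr'
        filter_upwards [Filter.eventually_ge_atTop (a + 1)] with t ht
        simp only [max_eq_left ht]
    · have hmono : StrictAntiOn g (Set.Ici (a + 1)) := by
        apply strictAntiOn_of_deriv_neg (convex_Ici _) hg.continuous.continuousOn
        intro t ht
        rw [interior_Ici] at ht
        exact hneg t (by have := Set.mem_Ioi.mp ht; linarith)
      have hGanti : Antitone (fun t : ℝ => g (max t (a + 1))) := by
        intro s t hst
        exact (hmono.antitoneOn) (Set.mem_Ici.mpr (le_max_right _ _)) (Set.mem_Ici.mpr (le_max_right _ _))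
          (max_le_max hst le_rfl)
      rcases tendsto_of_antitone hGanti with hdiv | ⟨ℓ, hℓ⟩
      · obtain ⟨t, ht⟩ := (hdiv.eventually_le_atBot (δ - 1)).exists
        have h20 : δ ≤ g (max t (a + 1)) := hgδ (max t (a + 1))
        have ht' : g (max t (a + 1)) ≤ δ - 1 := ht
        linarith
      · apply hlimit ℓ
        apply hℓ.congr'
        filter_upwards [Filter.eventually_ge_atTop (a + 1)] with t ht
        simp only [max_eq_left ht]
  -- two zeros of deriv g, reflections, and the period
  obtain ⟨t₀, -, ht₀⟩ := hzero 0
  obtain ⟨t₁, ht₁gt, ht₁⟩ := hzero t₀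
  obtain ⟨K, hK⟩ := lip_aux n H δ M hδ
  have hode2' : ∀ t, deriv (deriv g) t = (fun x => (1 - H ^ 2) * x
      + ((n : ℝ) - 2) * H * (x * (x ^ n)⁻¹)
      + ((n : ℝ) - 1) * (x * ((x ^ n)⁻¹) ^ 2)) (g t) := fun t => hρg t
  have hr0 := reflect _ δ M K hK g hg hg' hrange hode2' t₀ ht₀
  have hr1 := reflect _ δ M K hK g hg hg' hrange hode2' t₁ ht₁
  refine ⟨2 * (t₁ - t₀), by linarith, ?_⟩
  intro t
  calc g (t + 2 * (t₁ - t₀)) = g (2 * t₁ - (2 * t₀ - t)) := by ring_nf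
    _ = g (2 * t₀ - t) := hr1 _
    _ = g t := hr0 t
end

section
/- Let n > 2 be an integer, H > 0 and C ∈ ℝ. Let g : ℝ → ℝ be a differentiable, nonconstant function with g(t) > 0 and g′(t)² = C − (H·g(t) + g(t)^(1−n))² for all t ∈ ℝ. Then inf over t ∈ ℝ of √(n(n−1))·g(t)^(−n) < H·√n/√(n−1) < sup over t ∈ ℝ of √(n(n−1))·g(t)^(−n). -/
open Set

/-- If `g` is differentiable, `(deriv g)²` is continuous, `deriv g t₀ ≥ v > 0`, and
`(deriv g s)² ≥ v²` whenever `g s ≥ g t₀`, then `g` grows at least linearly after `t₀`. -/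
lemma escape_grow (g : ℝ → ℝ) (hg : Differentiable ℝ g)
    (hq : Continuous fun t => (deriv g t) ^ 2)
    {t₀ v : ℝ} (hv : 0 < v) (hd : v ≤ deriv g t₀)
    (hbig : ∀ s, g t₀ ≤ g s → v ^ 2 ≤ (deriv g s) ^ 2) :
    ∀ t, t₀ ≤ t → g t₀ + v * (t - t₀) ≤ g t := by
  have key : ∀ s, t₀ ≤ s → 0 < deriv g s := by
    by_contra h
    push_neg at h
    obtain ⟨s₁, hs₁, hds₁⟩ := h
    have ht₀s₁ : t₀ < s₁ := by
      rcases eq_or_lt_of_le hs₁ with rfl | h'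
      · linarith
      · exact h'
    have hzero : ∃ c ∈ Icc t₀ s₁, (deriv g c) ^ 2 ≤ v ^ 2 / 4 := by
      rcases le_or_gt (deriv g s₁) (-(v / 2)) with hc | hc
      · have hoc : Set.OrdConnected (deriv g '' Icc t₀ s₁) :=
          Set.ordConnected_Icc.image_deriv fun x _ => hg.differentiableAt
        have h1 : deriv g s₁ ∈ deriv g '' Icc t₀ s₁ := ⟨s₁, ⟨hs₁, le_refl _⟩, rfl⟩
        have h2 : deriv g t₀ ∈ deriv g '' Icc t₀ s₁ := ⟨t₀, ⟨le_refl _, hs₁⟩, rfl⟩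
        have h0 : (0 : ℝ) ∈ Icc (deriv g s₁) (deriv g t₀) := ⟨hds₁, by linarith⟩
        obtain ⟨c, hc', hc0⟩ := hoc.out h1 h2 h0
        exact ⟨c, hc', by rw [hc0]; nlinarith⟩
      · exact ⟨s₁, ⟨hs₁, le_refl _⟩, by nlinarith⟩
    obtain ⟨c, hcmem, hcle⟩ := hzero
    have hKcl : IsClosed {s : ℝ | (deriv g s) ^ 2 ≤ v ^ 2 / 4} :=
      isClosed_le hq continuous_const
    have hKcomp : IsCompact (Icc t₀ s₁ ∩ {s : ℝ | (deriv g s) ^ 2 ≤ v ^ 2 / 4}) :=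
      isCompact_Icc.inter_right hKcl
    set K := Icc t₀ s₁ ∩ {s : ℝ | (deriv g s) ^ 2 ≤ v ^ 2 / 4} with hKdef
    have hKne : K.Nonempty := ⟨c, hcmem, hcle⟩
    have hKbdd : BddBelow K := hKcomp.bddBelow
    have hmem : sInf K ∈ K := hKcomp.sInf_mem hKne
    set c₀ := sInf K with hc₀
    have hc₀mem : c₀ ∈ Icc t₀ s₁ := hmem.1
    have hc₀q : (deriv g c₀) ^ 2 ≤ v ^ 2 / 4 := hmem.2
    have ht₀c₀ : t₀ < c₀ := by
      rcases eq_or_lt_of_le hc₀mem.1 with h' | h'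
      · exfalso; rw [← h'] at hc₀q; nlinarith
      · exact h'
    have hpos : ∀ s ∈ Ico t₀ c₀, 0 < deriv g s := by
      intro s hs
      by_contra hneg
      push_neg at hneg
      have hsK : s ∉ K := notMem_of_lt_csInf hs.2 hKbdd
      have hsIcc : s ∈ Icc t₀ s₁ := ⟨hs.1, le_trans hs.2.le hc₀mem.2⟩
      have hqs : v ^ 2 / 4 < (deriv g s) ^ 2 := by
        by_contra h'; push_neg at h'; exact hsK ⟨hsIcc, h'⟩
      have hds : deriv g s < 0 := by
        rcases lt_or_eq_of_le hneg with h' | h'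
        · exact h'
        · exfalso; rw [h'] at hqs; nlinarith
      have ht₀s : t₀ < s := by
        rcases eq_or_lt_of_le hs.1 with h' | h'
        · exfalso; rw [← h'] at hds; linarith
        · exact h'
      have hoc : Set.OrdConnected (deriv g '' Icc t₀ s) :=
        Set.ordConnected_Icc.image_deriv fun x _ => hg.differentiableAt
      have h1 : deriv g s ∈ deriv g '' Icc t₀ s := ⟨s, ⟨hs.1, le_refl _⟩, rfl⟩
      have h2 : deriv g t₀ ∈ deriv g '' Icc t₀ s := ⟨t₀, ⟨le_refl _, ht₀s.le⟩, rfl⟩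
      have h0 : (0 : ℝ) ∈ Icc (deriv g s) (deriv g t₀) := ⟨hds.le, by linarith⟩
      obtain ⟨u, hu, hu0⟩ := hoc.out h1 h2 h0
      have huK : u ∈ K := ⟨⟨hu.1, le_trans hu.2 hsIcc.2⟩, by
        simp only [mem_setOf_eq, hu0]; nlinarith⟩
      have h1' : c₀ ≤ u := csInf_le hKbdd huK
      have h2' : u < c₀ := lt_of_le_of_lt hu.2 hs.2
      linarith
    have hmono : StrictMonoOn g (Icc t₀ c₀) :=
      strictMonoOn_of_deriv_pos (convex_Icc _ _) hg.continuous.continuousOn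
        (by
          intro x hx
          rw [interior_Icc] at hx
          exact hpos x ⟨hx.1.le, hx.2⟩)
    have hgc₀ : g t₀ ≤ g c₀ :=
      (hmono (left_mem_Icc.2 ht₀c₀.le) (right_mem_Icc.2 ht₀c₀.le) ht₀c₀).le
    have := hbig c₀ hgc₀
    nlinarith
  have hmono : StrictMonoOn g (Ici t₀) :=
    strictMonoOn_of_deriv_pos (convex_Ici _) hg.continuous.continuousOn
      (by intro x hx; rw [interior_Ici] at hx; exact key x hx.le)
  have hge : ∀ s ∈ interior (Ici t₀), v ≤ deriv g s := by
    intro s hs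
    rw [interior_Ici] at hs
    have h1 : g t₀ ≤ g s := (hmono self_mem_Ici (mem_Ici.2 hs.le) hs).le
    have h2 := hbig s h1
    have h3 := key s hs.le
    nlinarith
  intro t ht
  have := (convex_Ici t₀).mul_sub_le_image_sub_of_le_deriv hg.continuous.continuousOn
    (hg.differentiableOn) hge t₀ self_mem_Ici t (mem_Ici.2 ht) ht
  linarith

lemma escape_false (g : ℝ → ℝ) (hg : Differentiable ℝ g)
    (hq : Continuous fun t => (deriv g t) ^ 2)
    {t₀ v B : ℝ} (hv : 0 < v) (hd : v ≤ deriv g t₀)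
    (hbig : ∀ s, g t₀ ≤ g s → v ^ 2 ≤ (deriv g s) ^ 2)
    (hB : ∀ t, g t ≤ B) : False := by
  have hBg : g t₀ ≤ B := hB t₀
  have hdiv : 0 ≤ (B - g t₀) / v := div_nonneg (by linarith) hv.le
  have ht : t₀ ≤ t₀ + (B - g t₀) / v + 1 := by linarith
  have h := escape_grow g hg hq hv hd hbig (t₀ + (B - g t₀) / v + 1) ht
  have hmul : v * (t₀ + (B - g t₀) / v + 1 - t₀) = B - g t₀ + v := by
    field_simp
    ring
  have := hB (t₀ + (B - g t₀) / v + 1)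
  rw [hmul] at h
  linarith
lemma down_escape (g : ℝ → ℝ) (hg : Differentiable ℝ g)
    (hqc : Continuous fun t => (deriv g t) ^ 2)
    {t₁ b : ℝ} (hd : deriv g t₁ ≠ 0)
    (hhyp : ∀ s, g s ≤ g t₁ → (deriv g t₁) ^ 2 ≤ (deriv g s) ^ 2)
    (hb : ∀ t, b ≤ g t) : False := by
  rcases lt_or_gt_of_ne hd with hneg | hpos
  · -- deriv g t₁ < 0 : apply escape to -g
    have hG : Differentiable ℝ fun t => -g t := hg.neg
    have hG' : ∀ t, deriv (fun t => -g t) t = -deriv g t := fun t => deriv.neg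
    have hqG : Continuous fun t => (deriv (fun t => -g t) t) ^ 2 := by
      have : (fun t => (deriv (fun t => -g t) t) ^ 2) = fun t => (deriv g t) ^ 2 := by
        funext t; rw [hG' t, neg_sq]
      rw [this]; exact hqc
    refine escape_false (fun t => -g t) hG hqG (t₀ := t₁) (v := -deriv g t₁) (B := -b)
      (by linarith) (by rw [hG' t₁]) ?_ (fun t => by simpa using hb t)
    intro s hs
    have hgs : g s ≤ g t₁ := by simpa using hs
    have := hhyp s hgs
    rw [hG' s]
    simpa using this
  · -- deriv g t₁ > 0 : apply escape to fun t => -g (-t)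
    have hG : Differentiable ℝ fun t => -g (-t) := (hg.comp differentiable_neg).neg
    have hG' : ∀ t, deriv (fun t => -g (-t)) t = deriv g (-t) := by
      intro t
      have h1 : deriv (fun t => -g (-t)) t = -deriv (fun t => g (-t)) t := deriv.neg
      rw [h1, deriv_comp_neg g, neg_neg]
    have hqG : Continuous fun t => (deriv (fun t => -g (-t)) t) ^ 2 := by
      have : (fun t => (deriv (fun t => -g (-t)) t) ^ 2)
          = (fun t => (deriv g t) ^ 2) ∘ fun t => -t := by
        funext t; simp only [Function.comp]; rw [hG' t]
      rw [this]; exact hqc.comp continuous_neg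
    refine escape_false (fun t => -g (-t)) hG hqG (t₀ := -t₁) (v := deriv g t₁) (B := -b)
      hpos (by rw [hG' (-t₁), neg_neg]) ?_ (fun t => by simpa using hb (-t))
    intro s hs
    have hgs : g (-s) ≤ g t₁ := by
      have : -g (- -t₁) ≤ -g (-s) := hs
      rw [neg_neg] at this
      linarith
    have := hhyp (-s) hgs
    rw [hG' s]
    exact this

lemma up_escape (g : ℝ → ℝ) (hg : Differentiable ℝ g)
    (hqc : Continuous fun t => (deriv g t) ^ 2)
    {t₁ B : ℝ} (hd : deriv g t₁ ≠ 0)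
    (hhyp : ∀ s, g t₁ ≤ g s → (deriv g t₁) ^ 2 ≤ (deriv g s) ^ 2)
    (hB : ∀ t, g t ≤ B) : False := by
  have hG' : ∀ t, deriv (fun t => -g t) t = -deriv g t := fun t => deriv.neg
  have hqG : Continuous fun t => (deriv (fun t => -g t) t) ^ 2 := by
    have : (fun t => (deriv (fun t => -g t) t) ^ 2) = fun t => (deriv g t) ^ 2 := by
      funext t; rw [hG' t, neg_sq]
    rw [this]; exact hqc
  refine down_escape (fun t => -g t) hg.neg hqG (t₁ := t₁) (b := -B)
    (by rw [hG' t₁]; simpa using hd) ?_ (fun t => by simpa using hB t)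
  intro s hs
  have hgs : g t₁ ≤ g s := by simpa using hs
  have := hhyp s hgs
  rw [hG' s, hG' t₁]
  simpa using this
lemma psi_hasDeriv (n : ℕ) (H : ℝ) {x : ℝ} (hx : x ≠ 0) :
    HasDerivAt (fun y : ℝ => H * y + y ^ (1 - (n : ℤ)))
      (H + (1 - (n : ℝ)) * x ^ (-(n : ℤ))) x := by
  have h1 : HasDerivAt (fun y : ℝ => H * y) H x := by
    simpa using (hasDerivAt_id x).const_mul H
  have h2 := hasDerivAt_zpow (1 - (n : ℤ)) x (Or.inl hx)
  have h3 := h1.add h2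
  have he : (1 - (n : ℤ) - 1) = -(n : ℤ) := by ring
  have he' : H + (1 - (n : ℝ)) * x ^ (-(n : ℤ))
      = H + ((1 - (n : ℤ) : ℤ) : ℝ) * x ^ (1 - (n : ℤ) - 1) := by
    rw [he]
    push_cast
    ring
  rw [he']
  exact h3

lemma psi_mono (n : ℕ) (hn : 2 < n) (H : ℝ) (hH : 0 < H) :
    StrictMonoOn (fun x : ℝ => H * x + x ^ (1 - (n : ℤ)))
      (Ici ((((n : ℝ) - 1) / H) ^ (((n : ℕ) : ℝ))⁻¹)) := by
  have hn2 : (2 : ℝ) < (n : ℝ) := by exact_mod_cast hn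
  have hc : 0 < ((n : ℝ) - 1) / H := div_pos (by linarith) hH
  have hg₀pos : 0 < (((n : ℝ) - 1) / H) ^ (((n : ℕ) : ℝ))⁻¹ :=
    Real.rpow_pos_of_pos hc _
  have hg₀pow : ((((n : ℝ) - 1) / H) ^ (((n : ℕ) : ℝ))⁻¹) ^ (n : ℕ) = ((n : ℝ) - 1) / H :=
    Real.rpow_inv_natCast_pow hc.le (by omega)
  apply strictMonoOn_of_deriv_pos (convex_Ici _)
  · intro x hx
    exact (psi_hasDeriv n H (ne_of_gt (lt_of_lt_of_le hg₀pos hx))).continuousAt.continuousWithinAt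
  · intro x hx
    rw [interior_Ici] at hx
    have hxpos : 0 < x := lt_trans hg₀pos hx
    rw [(psi_hasDeriv n H hxpos.ne').deriv]
    have h : (((n : ℝ) - 1) / H) < x ^ (n : ℕ) := by
      have h' := Real.rpow_lt_rpow hg₀pos.le hx (by positivity : (0:ℝ) < ((n:ℕ):ℝ))
      rw [Real.rpow_natCast, Real.rpow_natCast, hg₀pow] at h'
      exact h'
    have h4 : (n : ℝ) - 1 < H * x ^ (n : ℕ) := by have := (div_lt_iff₀ hH).1 h; linarith
    have h5 : (0 : ℝ) < x ^ (n : ℕ) := pow_pos hxpos n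
    rw [zpow_neg, zpow_natCast]
    have h6 : H + (1 - (n : ℝ)) * (x ^ (n : ℕ))⁻¹
        = (H * x ^ (n : ℕ) - ((n : ℝ) - 1)) * (x ^ (n : ℕ))⁻¹ := by
      field_simp
      ring
    rw [h6]
    exact mul_pos (by linarith) (inv_pos.2 h5)

lemma psi_anti (n : ℕ) (hn : 2 < n) (H : ℝ) (hH : 0 < H) :
    StrictAntiOn (fun x : ℝ => H * x + x ^ (1 - (n : ℤ)))
      (Ioc 0 ((((n : ℝ) - 1) / H) ^ (((n : ℕ) : ℝ))⁻¹)) := by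
  have hn2 : (2 : ℝ) < (n : ℝ) := by exact_mod_cast hn
  have hc : 0 < ((n : ℝ) - 1) / H := div_pos (by linarith) hH
  have hg₀pos : 0 < (((n : ℝ) - 1) / H) ^ (((n : ℕ) : ℝ))⁻¹ :=
    Real.rpow_pos_of_pos hc _
  have hg₀pow : ((((n : ℝ) - 1) / H) ^ (((n : ℕ) : ℝ))⁻¹) ^ (n : ℕ) = ((n : ℝ) - 1) / H :=
    Real.rpow_inv_natCast_pow hc.le (by omega)
  apply strictAntiOn_of_deriv_neg (convex_Ioc _ _)
  · intro x hx
    exact (psi_hasDeriv n H (ne_of_gt hx.1)).continuousAt.continuousWithinAt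
  · intro x hx
    rw [interior_Ioc] at hx
    have hxpos : 0 < x := hx.1
    rw [(psi_hasDeriv n H hxpos.ne').deriv]
    have h : x ^ (n : ℕ) < ((n : ℝ) - 1) / H := by
      have h' := Real.rpow_lt_rpow hxpos.le hx.2 (by positivity : (0:ℝ) < ((n:ℕ):ℝ))
      rw [Real.rpow_natCast, Real.rpow_natCast, hg₀pow] at h'
      exact h'
    have h4 : x ^ (n : ℕ) * H < (n : ℝ) - 1 := (lt_div_iff₀ hH).1 h
    have h5 : (0 : ℝ) < x ^ (n : ℕ) := pow_pos hxpos n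
    rw [zpow_neg, zpow_natCast]
    have h6 : H + (1 - (n : ℝ)) * (x ^ (n : ℕ))⁻¹
        = (H * x ^ (n : ℕ) - ((n : ℝ) - 1)) * (x ^ (n : ℕ))⁻¹ := by
      field_simp
      ring
    rw [h6]
    exact mul_neg_of_neg_of_pos (by linarith) (inv_pos.2 h5)
/-- Theorem 11.10 (Euclidean case, a = 0, b = d = 1, H > 0, strict form for
nonconstant solutions): `inf |Φ| < H·√n/√(n−1) < sup |Φ|`, where
`|Φ| = √(n(n−1))·g^(−n)` along a positive nonconstant global solution of
`g′² = C − (H·g + g^(1−n))²`. -/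
theorem stmt_17 (n : ℕ) (hn : 2 < n) (H C : ℝ) (hH : 0 < H)
    (g : ℝ → ℝ) (hg : Differentiable ℝ g) (hgpos : ∀ t, 0 < g t)
    (hgnc : ∃ t₁ t₂ : ℝ, g t₁ ≠ g t₂)
    (hode : ∀ t : ℝ, (deriv g t) ^ 2 =
      C - (H * g t + g t ^ (1 - (n : ℤ))) ^ 2) :
    (⨅ t : ℝ, Real.sqrt ((n : ℝ) * ((n : ℝ) - 1)) * g t ^ (-(n : ℤ)))
        < H * Real.sqrt n / Real.sqrt ((n : ℝ) - 1) ∧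
    H * Real.sqrt n / Real.sqrt ((n : ℝ) - 1)
        < (⨆ t : ℝ, Real.sqrt ((n : ℝ) * ((n : ℝ) - 1)) * g t ^ (-(n : ℤ))) := by
  have hn2 : (2 : ℝ) < (n : ℝ) := by exact_mod_cast hn
  have hn1 : (0 : ℝ) < (n : ℝ) - 1 := by linarith
  have hn0 : (0 : ℝ) < (n : ℝ) := by linarith
  -- positivity of ψ(g t)
  have hψpos : ∀ t, 0 < H * g t + g t ^ (1 - (n : ℤ)) :=
    fun t => add_pos (mul_pos hH (hgpos t)) (zpow_pos (hgpos t) _)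
  -- ψ(g t)² ≤ C
  have hψsq : ∀ t, (H * g t + g t ^ (1 - (n : ℤ))) ^ 2 ≤ C := by
    intro t
    have h := hode t
    nlinarith [sq_nonneg (deriv g t)]
  have hC : 0 < C := lt_of_lt_of_le (pow_pos (hψpos 0) 2) (hψsq 0)
  have hsC : 0 < Real.sqrt C := Real.sqrt_pos.2 hC
  have hψle : ∀ t, H * g t + g t ^ (1 - (n : ℤ)) ≤ Real.sqrt C := by
    intro t
    have h1 : H * g t + g t ^ (1 - (n : ℤ))
        = Real.sqrt ((H * g t + g t ^ (1 - (n : ℤ))) ^ 2) :=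
      (Real.sqrt_sq (hψpos t).le).symm
    rw [h1]
    exact Real.sqrt_le_sqrt (hψsq t)
  -- lower bound for g
  have hzneg : (1 : ℝ) - (n : ℝ) < 0 := by linarith
  have hlb : ∀ t, Real.sqrt C ^ ((1 - (n : ℝ))⁻¹) ≤ g t := by
    intro t
    rw [Real.rpow_inv_le_iff_of_neg hsC (hgpos t) hzneg]
    rw [show ((1 : ℝ) - (n : ℝ)) = (((1 - (n : ℤ)) : ℤ) : ℝ) by push_cast; ring,
      Real.rpow_intCast]
    have h3 := hψle t
    have h4 := mul_pos hH (hgpos t)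
    linarith
  set ℓ : ℝ := Real.sqrt C ^ ((1 - (n : ℝ))⁻¹) with hℓdef
  have hℓpos : 0 < ℓ := Real.rpow_pos_of_pos hsC _
  -- the turning value g₀
  set g₀ : ℝ := (((n : ℝ) - 1) / H) ^ (((n : ℕ) : ℝ))⁻¹ with hg₀def
  have hcpos : 0 < ((n : ℝ) - 1) / H := div_pos hn1 hH
  have hg₀pos : 0 < g₀ := Real.rpow_pos_of_pos hcpos _
  have hg₀pow : g₀ ^ (n : ℕ) = ((n : ℝ) - 1) / H :=
    Real.rpow_inv_natCast_pow hcpos.le (by omega)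
  have hlt_of : ∀ x : ℝ, 0 < x → g₀ < x → ((n : ℝ) - 1) / H < x ^ (n : ℕ) := by
    intro x hx hgx
    have h' := Real.rpow_lt_rpow hg₀pos.le hgx (by positivity : (0:ℝ) < ((n:ℕ):ℝ))
    rw [Real.rpow_natCast, Real.rpow_natCast, hg₀pow] at h'
    exact h'
  have hgt_of : ∀ x : ℝ, 0 < x → x < g₀ → x ^ (n : ℕ) < ((n : ℝ) - 1) / H := by
    intro x hx hgx
    have h' := Real.rpow_lt_rpow hx.le hgx (by positivity : (0:ℝ) < ((n:ℕ):ℝ))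
    rw [Real.rpow_natCast, Real.rpow_natCast, hg₀pow] at h'
    exact h'
  -- continuity of (deriv g)²
  have hqc : Continuous fun t => (deriv g t) ^ 2 := by
    have he : (fun t => (deriv g t) ^ 2)
        = fun t => C - (H * g t + g t ^ (1 - (n : ℤ))) ^ 2 := funext hode
    rw [he]
    have hzc : Continuous fun t => g t ^ (1 - (n : ℤ)) :=
      hg.continuous.zpow₀ _ fun t => Or.inl (hgpos t).ne'
    exact continuous_const.sub
      (((continuous_const.mul hg.continuous).add hzc).pow 2)
  -- a point with nonzero derivative
  have hdne : ∃ t₀, deriv g t₀ ≠ 0 := by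
    by_contra h
    push_neg at h
    obtain ⟨t₁, t₂, hne⟩ := hgnc
    exact hne (is_const_of_deriv_eq_zero hg h t₁ t₂)
  obtain ⟨t₀, hd0⟩ := hdne
  -- g must go strictly below g₀ somewhere
  have claimA : ∃ t, g t < g₀ := by
    by_contra hcon
    push_neg at hcon
    refine down_escape g hg hqc hd0 ?_ hcon
    intro s hs
    rw [hode s, hode t₀]
    have h1 : H * g s + g s ^ (1 - (n : ℤ)) ≤ H * g t₀ + g t₀ ^ (1 - (n : ℤ)) := by
      rcases eq_or_lt_of_le hs with h | h
      · rw [h]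
      · simpa using (psi_mono n hn H hH (hcon s) (hcon t₀) h).le
    have h2 := hψpos s
    nlinarith
  -- g must go strictly above g₀ somewhere
  have claimB : ∃ t, g₀ < g t := by
    by_contra hcon
    push_neg at hcon
    refine up_escape g hg hqc hd0 ?_ hcon
    intro s hs
    rw [hode s, hode t₀]
    have hms : g s ∈ Ioc (0:ℝ) g₀ := ⟨hgpos s, hcon s⟩
    have hmt : g t₀ ∈ Ioc (0:ℝ) g₀ := ⟨hgpos t₀, hcon t₀⟩
    have h1 : H * g s + g s ^ (1 - (n : ℤ)) ≤ H * g t₀ + g t₀ ^ (1 - (n : ℤ)) := by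
      rcases eq_or_lt_of_le hs with h | h
      · rw [h]
      · simpa using (psi_anti n hn H hH hmt hms h).le
    have h2 := hψpos s
    nlinarith
  obtain ⟨ta, hta⟩ := claimA
  obtain ⟨tb, htb⟩ := claimB
  -- boundedness of the |Φ| family
  have hbddB : BddBelow (Set.range fun t =>
      Real.sqrt ((n : ℝ) * ((n : ℝ) - 1)) * g t ^ (-(n : ℤ))) := by
    refine ⟨0, ?_⟩
    rintro _ ⟨t, rfl⟩
    exact mul_nonneg (Real.sqrt_nonneg _) (zpow_pos (hgpos t) _).le
  have hbddA : BddAbove (Set.range fun t =>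
      Real.sqrt ((n : ℝ) * ((n : ℝ) - 1)) * g t ^ (-(n : ℤ))) := by
    refine ⟨Real.sqrt ((n : ℝ) * ((n : ℝ) - 1)) * ℓ ^ (-(n : ℤ)), ?_⟩
    rintro _ ⟨t, rfl⟩
    have h1 : g t ^ (-(n : ℤ)) ≤ ℓ ^ (-(n : ℤ)) := by
      rw [zpow_neg, zpow_neg, zpow_natCast, zpow_natCast]
      have := pow_le_pow_left₀ hℓpos.le (hlb t) n
      have hp := pow_pos hℓpos n
      exact inv_anti₀ hp this
    exact mul_le_mul_of_nonneg_left h1 (Real.sqrt_nonneg _)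
  -- numeric comparisons
  have e1 : Real.sqrt ((n : ℝ) * ((n : ℝ) - 1))
      = Real.sqrt (n : ℝ) * Real.sqrt ((n : ℝ) - 1) := Real.sqrt_mul hn0.le _
  have e2 : Real.sqrt ((n : ℝ) - 1) * Real.sqrt ((n : ℝ) - 1) = (n : ℝ) - 1 :=
    Real.mul_self_sqrt hn1.le
  have hsn : 0 < Real.sqrt (n : ℝ) := Real.sqrt_pos.2 hn0
  have hsn1 : 0 < Real.sqrt ((n : ℝ) - 1) := Real.sqrt_pos.2 hn1
  have hvb : Real.sqrt ((n : ℝ) * ((n : ℝ) - 1)) * g tb ^ (-(n : ℤ))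
      < H * Real.sqrt (n : ℝ) / Real.sqrt ((n : ℝ) - 1) := by
    have hxb : ((n : ℝ) - 1) / H < g tb ^ (n : ℕ) := hlt_of _ (hgpos tb) htb
    have h5 : (0 : ℝ) < g tb ^ (n : ℕ) := pow_pos (hgpos tb) n
    have hkey : ((n : ℝ) - 1) * (g tb ^ (n : ℕ))⁻¹ < H := by
      rw [← div_eq_mul_inv, div_lt_iff₀ h5]
      have := (div_lt_iff₀ hH).1 hxb
      linarith
    rw [zpow_neg, zpow_natCast, lt_div_iff₀ hsn1, e1]
    calc Real.sqrt (n : ℝ) * Real.sqrt ((n : ℝ) - 1) * (g tb ^ (n : ℕ))⁻¹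
          * Real.sqrt ((n : ℝ) - 1)
        = ((n : ℝ) - 1) * (g tb ^ (n : ℕ))⁻¹ * Real.sqrt (n : ℝ) := by
          linear_combination Real.sqrt (n : ℝ) * (g tb ^ (n : ℕ))⁻¹ * e2
      _ < H * Real.sqrt (n : ℝ) := mul_lt_mul_of_pos_right hkey hsn
  have hva : H * Real.sqrt (n : ℝ) / Real.sqrt ((n : ℝ) - 1)
      < Real.sqrt ((n : ℝ) * ((n : ℝ) - 1)) * g ta ^ (-(n : ℤ)) := by
    have hxa : g ta ^ (n : ℕ) < ((n : ℝ) - 1) / H := hgt_of _ (hgpos ta) hta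
    have h5 : (0 : ℝ) < g ta ^ (n : ℕ) := pow_pos (hgpos ta) n
    have hkey : H < ((n : ℝ) - 1) * (g ta ^ (n : ℕ))⁻¹ := by
      rw [← div_eq_mul_inv, lt_div_iff₀ h5]
      have := (lt_div_iff₀ hH).1 hxa
      linarith
    rw [zpow_neg, zpow_natCast, div_lt_iff₀ hsn1, e1]
    calc H * Real.sqrt (n : ℝ)
        < ((n : ℝ) - 1) * (g ta ^ (n : ℕ))⁻¹ * Real.sqrt (n : ℝ) :=
          mul_lt_mul_of_pos_right hkey hsn
      _ = Real.sqrt (n : ℝ) * Real.sqrt ((n : ℝ) - 1) * (g ta ^ (n : ℕ))⁻¹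
          * Real.sqrt ((n : ℝ) - 1) := by
            linear_combination (-(Real.sqrt (n : ℝ) * (g ta ^ (n : ℕ))⁻¹)) * e2
  exact ⟨lt_of_le_of_lt (ciInf_le hbddB tb) hvb,
    lt_of_lt_of_le hva (le_ciSup hbddA ta)⟩
end

section
/- Let n > 2 be an integer, H ∈ ℝ with H ≠ 0, and C ∈ ℝ. Let g : ℝ → ℝ be a differentiable, nonconstant function with g(t) > 0 and g′(t)² = C + (H·g(t) + g(t)^(1−n))² for all t ∈ ℝ. Then for every t ∈ ℝ one has g(t) > q₁(H), where q₁(H) = (−1/H)^(1/n) if H < 0 and q₁(H) = ((n−1)/H)^(1/n) if H > 0; equivalently, √(n(n−1))·g(t)^(−n) < b₃(H) for all t, where b₃(H) = −√(n(n−1))·H if H < 0 and b₃(H) = H·√n/√(n−1) if H > 0. -/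
set_option linter.unusedVariables false
set_option linter.deprecated false

open Set Filter Topology

private lemma ev_lt_of_deriv_neg {g : ℝ → ℝ} {x : ℝ} (hg : DifferentiableAt ℝ g x)
    (h : deriv g x < 0) : ∀ᶠ t in 𝓝[>] x, g t < g x := by
  have hs : Tendsto (slope g x) (𝓝[≠] x) (𝓝 (deriv g x)) :=
    hasDerivAt_iff_tendsto_slope.mp hg.hasDerivAt
  have hev : ∀ᶠ t in 𝓝[≠] x, slope g x t < 0 := hs.eventually (gt_mem_nhds h)
  have hle : 𝓝[>] x ≤ 𝓝[≠] x := nhdsWithin_mono x fun t ht => ne_of_gt ht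
  filter_upwards [hle hev, self_mem_nhdsWithin] with t hst hx
  rw [slope_def_field] at hst
  have hxt : (0:ℝ) < t - x := sub_pos.mpr hx
  rcases div_neg_iff.mp hst with ⟨h1, h2⟩ | ⟨h1, h2⟩
  · linarith
  · linarith

private lemma deriv_neg_of_ne {g : ℝ → ℝ} (hg : Differentiable ℝ g) {a b : ℝ}
    (hne : ∀ s ∈ Icc a b, deriv g s ≠ 0) (hda : deriv g a < 0) :
    ∀ s ∈ Icc a b, deriv g s < 0 := by
  intro s hs
  rcases lt_or_ge (deriv g s) 0 with h | h
  · exact h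
  exfalso
  have h' : 0 < deriv g s := lt_of_le_of_ne h (Ne.symm (hne s hs))
  have hmem : (0:ℝ) ∈ deriv g '' Ioo a s :=
    exists_hasDerivWithinAt_eq_of_gt_of_lt hs.1
      (fun x _ => (hg x).hasDerivAt.hasDerivWithinAt) hda h'
  obtain ⟨c, hc, hc0⟩ := hmem
  exact hne c ⟨hc.1.le, hc.2.le.trans hs.2⟩ hc0

private lemma esc_core {g : ℝ → ℝ} (hg : Differentiable ℝ g) (hgpos : ∀ t, 0 < g t)
    (t₀ : ℝ) {ε : ℝ} (hε : 0 < ε) (hd0 : deriv g t₀ ≤ -ε)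
    (hlow : ∀ t, g t ≤ g t₀ → ε ^ 2 ≤ (deriv g t) ^ 2) : False := by
  have hd0' : deriv g t₀ < 0 := by linarith
  -- Claim 1 : g stays ≤ g t₀ to the right of t₀
  have claim1 : ∀ t, t₀ ≤ t → g t ≤ g t₀ := by
    by_contra hcon
    push_neg at hcon
    obtain ⟨t₂, ht₂, hgt₂⟩ := hcon
    have ht₂' : t₀ < t₂ := by
      rcases lt_or_eq_of_le ht₂ with h | h
      · exact h
      · exfalso; rw [← h] at hgt₂; exact lt_irrefl _ hgt₂
    set E : Set ℝ := {t | t ∈ Icc t₀ t₂ ∧ g t₀ < g t} with hE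
    have hEne : E.Nonempty := ⟨t₂, ⟨ht₂, le_rfl⟩, hgt₂⟩
    have hEbdd : BddBelow E := ⟨t₀, fun x hx => hx.1.1⟩
    set τ := sInf E with hτ
    have hτt₂ : τ ≤ t₂ := csInf_le hEbdd ⟨⟨ht₂, le_rfl⟩, hgt₂⟩
    have hτt₀ : t₀ ≤ τ := le_csInf hEne fun x hx => hx.1.1
    -- t₀ < τ
    have hττ : t₀ < τ := by
      rcases lt_or_eq_of_le hτt₀ with h | h
      · exact h
      exfalso
      have hev := ev_lt_of_deriv_neg (hg t₀) hd0'
      obtain ⟨u, hu, hsub⟩ := mem_nhdsGT_iff_exists_Ioo_subset.mp hev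
      obtain ⟨w, hwE, hwu⟩ := (csInf_lt_iff hEbdd hEne).mp
        (show sInf E < u by rw [← hτ, ← h]; exact hu)
      have hw₀ : t₀ < w := by
        rcases lt_or_eq_of_le hwE.1.1 with h' | h'
        · exact h'
        · exfalso; rw [← h'] at hwE; exact lt_irrefl _ hwE.2
      exact absurd hwE.2 (not_lt.mpr (hsub ⟨hw₀, hwu⟩).le)
    -- g ≤ g t₀ strictly before τ
    have hlt : ∀ s, t₀ ≤ s → s < τ → g s ≤ g t₀ := by
      intro s hs hsτ
      by_contra hgs
      push_neg at hgs
      have : s ∈ E := ⟨⟨hs, hsτ.le.trans hτt₂⟩, hgs⟩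
      exact absurd (csInf_le hEbdd this) (not_le.mpr hsτ)
    -- g τ ≤ g t₀ by continuity from the left
    have hτle : g τ ≤ g t₀ := by
      have htd : Tendsto g (𝓝[<] τ) (𝓝 (g τ)) :=
        (hg τ).continuousAt.continuousWithinAt.tendsto
      refine le_of_tendsto htd ?_
      have hmem : Ioo t₀ τ ∈ 𝓝[<] τ := Ioo_mem_nhdsLT_of_mem ⟨hττ, le_rfl⟩
      filter_upwards [hmem] with s hs
      exact hlt s hs.1.le hs.2
    have hIcc : ∀ s ∈ Icc t₀ τ, g s ≤ g t₀ := by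
      intro s hs
      rcases lt_or_eq_of_le hs.2 with h | h
      · exact hlt s hs.1 h
      · rw [h]; exact hτle
    have hder : ∀ s ∈ Icc t₀ τ, deriv g s ≠ 0 := by
      intro s hs
      have := hlow s (hIcc s hs)
      intro h0
      rw [h0] at this
      nlinarith
    have hneg : ∀ s ∈ Icc t₀ τ, deriv g s < 0 := deriv_neg_of_ne hg hder hd0'
    have hgτlt : g τ < g t₀ := by
      have hstrict : StrictAntiOn g (Icc t₀ τ) := by
        apply strictAntiOn_of_deriv_neg (convex_Icc _ _) hg.continuous.continuousOn
        intro x hx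
        rw [interior_Icc] at hx
        exact hneg x ⟨hx.1.le, hx.2.le⟩
      exact hstrict ⟨le_rfl, hττ.le⟩ ⟨hττ.le, le_rfl⟩ hττ
    -- contradiction near τ from the right
    have hdτ : deriv g τ < 0 := hneg τ ⟨hττ.le, le_rfl⟩
    have hev := ev_lt_of_deriv_neg (hg τ) hdτ
    obtain ⟨u, hu, hsub⟩ := mem_nhdsGT_iff_exists_Ioo_subset.mp hev
    obtain ⟨w, hwE, hwu⟩ := (csInf_lt_iff hEbdd hEne).mp hu
    have hwτ : τ ≤ w := csInf_le hEbdd hwE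
    rcases lt_or_eq_of_le hwτ with h | h
    · have : g w < g τ := hsub ⟨h, hwu⟩
      linarith [hwE.2]
    · rw [← h] at hwE
      linarith [hwE.2]
  -- Claim 2 : derivative stays ≤ -ε to the right of t₀
  have claim2 : ∀ t, t₀ ≤ t → deriv g t ≤ -ε := by
    intro t ht
    have hder : ∀ s ∈ Icc t₀ t, deriv g s ≠ 0 := by
      intro s hs
      have := hlow s (claim1 s hs.1)
      intro h0
      rw [h0] at this
      nlinarith
    have hneg := deriv_neg_of_ne hg hder hd0' t ⟨ht, le_rfl⟩
    have := hlow t (claim1 t ht)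
    nlinarith
  -- now escape to -∞
  set b := t₀ + g t₀ / ε + 1 with hb
  have hbt : t₀ < b := by
    have : 0 < g t₀ / ε := div_pos (hgpos t₀) hε
    rw [hb]; linarith
  obtain ⟨c, hc, hceq⟩ := exists_deriv_eq_slope g hbt hg.continuous.continuousOn
    hg.differentiableOn
  have hcd : deriv g c ≤ -ε := claim2 c hc.1.le
  have hslope : g b - g t₀ = deriv g c * (b - t₀) := by
    rw [hceq, div_mul_cancel₀ _ (ne_of_gt (by linarith : (0:ℝ) < b - t₀))]
  have hbt' : b - t₀ = g t₀ / ε + 1 := by rw [hb]; ring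
  have hεg : ε * (g t₀ / ε) = g t₀ := by field_simp
  have heq : -ε * (b - t₀) = -g t₀ - ε := by
    rw [hbt']; field_simp; ring
  have hmul : deriv g c * (b - t₀) ≤ -ε * (b - t₀) :=
    mul_le_mul_of_nonneg_right hcd (by linarith : (0:ℝ) ≤ b - t₀)
  linarith [hgpos b]

private lemma esc {g : ℝ → ℝ} (hg : Differentiable ℝ g) (hgpos : ∀ t, 0 < g t)
    (t₀ : ℝ) {ε : ℝ} (hε : 0 < ε) (hd0 : ε ≤ |deriv g t₀|)
    (hlow : ∀ t, g t ≤ g t₀ → ε ^ 2 ≤ (deriv g t) ^ 2) : False := by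
  rcases le_or_gt 0 (deriv g t₀) with hsgn | hsgn
  · -- reflect time
    have hGdiff : Differentiable ℝ (fun t => g (2 * t₀ - t)) :=
      hg.comp ((differentiable_const (2 * t₀)).sub differentiable_id)
    have hGderiv : ∀ t, deriv (fun t => g (2 * t₀ - t)) t = -deriv g (2 * t₀ - t) := by
      intro t
      exact deriv_comp_const_sub g (2 * t₀) t
    have hGt₀ : g (2 * t₀ - t₀) = g t₀ := by congr 1; ring
    apply esc_core hGdiff (fun t => hgpos _) t₀ hε
    · rw [hGderiv, show 2 * t₀ - t₀ = t₀ by ring]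
      rw [abs_of_nonneg hsgn] at hd0
      linarith
    · intro t ht
      rw [hGderiv t, neg_sq]
      refine hlow _ ?_
      rw [hGt₀] at ht
      exact ht
  · apply esc_core hg hgpos t₀ hε ?_ hlow
    rw [abs_of_neg hsgn] at hd0
    linarith

private lemma gron_forward {g : ℝ → ℝ} (hg : Differentiable ℝ g) {F : ℝ → ℝ}
    (hode : ∀ t, (deriv g t) ^ 2 = F (g t)) {q δ K : ℝ} (hK : 0 < K)
    (hquad : ∀ v, |v - q| ≤ δ → F v ≤ K ^ 2 * (v - q) ^ 2)
    {a b : ℝ} (hga : g a = q) (hnear : ∀ s ∈ Icc a b, |g s - q| ≤ δ) :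
    ∀ s ∈ Icc a b, g s = q := by
  have key := norm_le_gronwallBound_of_norm_deriv_right_le
    (f := fun t => g t - q) (f' := deriv g) (δ := 0) (K := K) (ε := 0) (a := a) (b := b)
    ((hg.continuous.sub continuous_const).continuousOn)
    (fun x _ => ((hg x).hasDerivAt.sub_const q).hasDerivWithinAt)
    (by simp [hga]) ?_
  · intro s hs
    have h1 := key s hs
    rw [gronwallBound_ε0_δ0] at h1
    have h2 : |g s - q| ≤ 0 := by simpa [Real.norm_eq_abs] using h1
    have h3 := abs_nonneg (g s - q)
    have h4 := abs_eq_zero.mp (le_antisymm h2 h3)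
    linarith
  · intro x hx
    have h1 : (deriv g x) ^ 2 ≤ K ^ 2 * (g x - q) ^ 2 := by
      rw [hode x]
      exact hquad _ (hnear x (Ico_subset_Icc_self hx))
    have h2 : (deriv g x) ^ 2 ≤ (K * |g x - q|) ^ 2 := by
      rw [mul_pow, sq_abs]; exact h1
    have h3 : |deriv g x| ≤ K * |g x - q| := by
      have hnn : 0 ≤ K * |g x - q| := by positivity
      nlinarith [abs_nonneg (deriv g x), sq_abs (deriv g x)]
    simp only [Real.norm_eq_abs]
    linarith

private lemma gron_const {g : ℝ → ℝ} (hg : Differentiable ℝ g) {F : ℝ → ℝ}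
    (hode : ∀ t, (deriv g t) ^ 2 = F (g t)) {q δ K : ℝ} (hδ : 0 < δ) (hK : 0 < K)
    (hquad : ∀ v, |v - q| ≤ δ → F v ≤ K ^ 2 * (v - q) ^ 2)
    {t₀ : ℝ} (ht₀ : g t₀ = q) : ∀ t, g t = q := by
  have hZc : IsClosed {t : ℝ | g t = q} := isClosed_eq hg.continuous continuous_const
  have hZo : IsOpen {t : ℝ | g t = q} := by
    rw [Metric.isOpen_iff]
    intro x hx
    have hx' : g x = q := hx
    obtain ⟨r, hr, hball⟩ : ∃ r > 0, ∀ s, |s - x| < r → |g s - q| ≤ δ := by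
      have hc : ContinuousAt g x := hg.continuous.continuousAt
      rcases Metric.continuousAt_iff.mp hc δ hδ with ⟨r, hr, hrb⟩
      refine ⟨r, hr, fun s hs => ?_⟩
      have := hrb (show dist s x < r by rwa [Real.dist_eq])
      rw [Real.dist_eq, hx'] at this
      exact this.le
    refine ⟨r, hr, fun s hs => ?_⟩
    rw [Metric.mem_ball, Real.dist_eq] at hs
    show g s = q
    rcases le_total x s with hcase | hcase
    · refine gron_forward hg hode hK hquad hx' (fun u hu => ?_) s ⟨hcase, le_rfl⟩
      apply hball u
      have h0 : (0:ℝ) ≤ u - x := by linarith [hu.1]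
      rw [abs_of_nonneg h0]
      have h5 := le_abs_self (s - x)
      linarith [hu.2]
    · -- backward: reflect
      have hGdiff : Differentiable ℝ (fun t => g (2 * x - t)) :=
        hg.comp ((differentiable_const (2 * x)).sub differentiable_id)
      have hGderiv : ∀ t, deriv (fun t => g (2 * x - t)) t = -deriv g (2 * x - t) := fun t =>
        deriv_comp_const_sub g (2 * x) t
      have hGode : ∀ t, (deriv (fun t => g (2 * x - t)) t) ^ 2 = F (g (2 * x - t)) := by
        intro t
        rw [hGderiv t, neg_sq]
        exact hode _
      have hGx : g (2 * x - x) = q := by rw [show 2 * x - x = x by ring]; exact hx'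
      have hres := gron_forward hGdiff hGode hK hquad hGx
        (a := x) (b := 2 * x - s)
        (fun u hu => by
          apply hball (2 * x - u)
          have h0 : (0:ℝ) ≤ u - x := by linarith [hu.1]
          rw [show 2 * x - u - x = -(u - x) by ring, abs_neg, abs_of_nonneg h0]
          have h5 : |s - x| = x - s := by
            rw [abs_sub_comm, abs_of_nonneg (by linarith : (0:ℝ) ≤ x - s)]
          linarith [hu.2])
        (2 * x - s) ⟨by linarith, le_rfl⟩
      rw [show 2 * x - (2 * x - s) = s by ring] at hres
      exact hres
  have hZuniv : {t : ℝ | g t = q} = univ := IsClopen.eq_univ ⟨hZc, hZo⟩ ⟨t₀, ht₀⟩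
  intro t
  have : t ∈ {t : ℝ | g t = q} := hZuniv ▸ mem_univ t
  exact this

private lemma zpow_one_sub (n : ℕ) {v : ℝ} (hv : 0 < v) :
    v ^ (1 - (n:ℤ)) = v * (v ^ n)⁻¹ := by
  rw [show (1 - (n:ℤ)) = 1 + (-(n:ℤ)) by ring, zpow_add₀ hv.ne', zpow_one, zpow_neg,
    zpow_natCast]

private lemma zpow_one_sub' (n : ℕ) (hn : 2 < n) {v : ℝ} (hv : v ≠ 0) :
    v ^ (1 - (n:ℤ)) = (v ^ (n - 1))⁻¹ := by
  rw [← zpow_natCast v (n - 1), ← zpow_neg]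
  congr 1
  omega

private lemma zpow_neg_anti {a v : ℝ} (ha : 0 < a) (hav : a ≤ v) (n : ℕ) :
    v ^ (-(n:ℤ)) ≤ a ^ (-(n:ℤ)) := by
  rw [zpow_neg, zpow_neg, zpow_natCast, zpow_natCast]
  exact inv_anti₀ (pow_pos ha n) (pow_le_pow_left₀ ha.le hav n)

private lemma hasDerivAt_hfun (n : ℕ) (H : ℝ) {v : ℝ} (hv : v ≠ 0) :
    HasDerivAt (fun v : ℝ => H * v + v ^ (1 - (n:ℤ)))
      (H + (1 - (n:ℝ)) * v ^ (-(n:ℤ))) v := by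
  have h1 : HasDerivAt (fun v : ℝ => H * v) H v := by
    simpa using (hasDerivAt_id v).const_mul H
  have h2 := hasDerivAt_zpow (1 - (n:ℤ)) v (Or.inl hv)
  rw [show (1 : ℤ) - n - 1 = -(n:ℤ) by ring] at h2
  have h3 := h1.add h2
  have : ((1 - (n:ℤ) : ℤ) : ℝ) = 1 - (n:ℝ) := by push_cast; ring
  rw [this] at h3
  exact h3

private lemma hasDerivAt_pfun (n : ℕ) (H : ℝ) {v : ℝ} (hv : v ≠ 0) :
    HasDerivAt (fun v : ℝ => H + (1 - (n:ℝ)) * v ^ (-(n:ℤ)))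
      ((1 - (n:ℝ)) * (-(n:ℝ)) * v ^ (-(n:ℤ) - 1)) v := by
  have h2 := hasDerivAt_zpow (-(n:ℤ)) v (Or.inl hv)
  have h3 := (h2.const_mul (1 - (n:ℝ))).const_add H
  have : ((-(n:ℤ) : ℤ) : ℝ) = -(n:ℝ) := by push_cast; ring
  rw [this] at h3
  exact h3.congr_deriv (by ring)

private lemma qb1 (n : ℕ) (hn : 2 < n) {H q₁ : ℝ} (hq : 0 < q₁) (hq1n : H * q₁ ^ n = -1) :
    ∃ K, 0 < K ∧ ∀ v, |v - q₁| ≤ q₁ / 2 →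
      (H * v + v ^ (1 - (n:ℤ))) ^ 2 ≤ K ^ 2 * (v - q₁) ^ 2 := by
  have hq2 : (0:ℝ) < q₁ / 2 := by linarith
  set K : ℝ := |H| + (n:ℝ) * (q₁ / 2) ^ (-(n:ℤ)) + 1 with hKdef
  have hzp : (0:ℝ) < (q₁ / 2) ^ (-(n:ℤ)) := zpow_pos hq2 _
  have hnR : (2:ℝ) < n := by exact_mod_cast hn
  have hK : 0 < K := by
    have h1 : (0:ℝ) ≤ |H| := abs_nonneg H
    have h2 : (0:ℝ) ≤ (n:ℝ) * (q₁ / 2) ^ (-(n:ℤ)) := by positivity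
    rw [hKdef]; linarith
  refine ⟨K, hK, fun v hv => ?_⟩
  rw [abs_le] at hv
  have hvmem : v ∈ Icc (q₁ / 2) (3 * q₁ / 2) := ⟨by linarith [hv.1], by linarith [hv.2]⟩
  have hqmem : q₁ ∈ Icc (q₁ / 2) (3 * q₁ / 2) := ⟨by linarith, by linarith⟩
  -- value at q₁ is 0
  have hq0 : H * q₁ + q₁ ^ (1 - (n:ℤ)) = 0 := by
    rw [zpow_one_sub n hq]
    have hne : (q₁:ℝ) ^ n ≠ 0 := by positivity
    have : H * q₁ + q₁ * (q₁ ^ n)⁻¹ = q₁ * (H * q₁ ^ n + 1) * (q₁ ^ n)⁻¹ := by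
      field_simp
    rw [this, hq1n]
    ring
  -- Lipschitz bound
  have hbound : ∀ x ∈ Icc (q₁ / 2) (3 * q₁ / 2),
      ‖H + (1 - (n:ℝ)) * x ^ (-(n:ℤ))‖ ≤ K := by
    intro x hx
    have hx0 : (0:ℝ) < x := lt_of_lt_of_le hq2 hx.1
    have hxz : (0:ℝ) < x ^ (-(n:ℤ)) := zpow_pos hx0 _
    have hanti := zpow_neg_anti hq2 hx.1 n
    rw [Real.norm_eq_abs]
    have h1 : |H + (1 - (n:ℝ)) * x ^ (-(n:ℤ))| ≤ |H| + |(1 - (n:ℝ)) * x ^ (-(n:ℤ))| :=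
      abs_add_le _ _
    have h2 : |(1 - (n:ℝ)) * x ^ (-(n:ℤ))| = ((n:ℝ) - 1) * x ^ (-(n:ℤ)) := by
      rw [abs_mul, abs_of_neg (by linarith : (1:ℝ) - n < 0), abs_of_pos hxz]
      ring
    have h3 : ((n:ℝ) - 1) * x ^ (-(n:ℤ)) ≤ (n:ℝ) * (q₁ / 2) ^ (-(n:ℤ)) := by
      apply mul_le_mul (by linarith) hanti hxz.le (by linarith)
    rw [hKdef]
    linarith
  have lip := (convex_Icc (q₁ / 2) (3 * q₁ / 2)).norm_image_sub_le_of_norm_hasDerivWithin_le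
    (f := fun v : ℝ => H * v + v ^ (1 - (n:ℤ)))
    (f' := fun x : ℝ => H + (1 - (n:ℝ)) * x ^ (-(n:ℤ)))
    (fun x hx => (hasDerivAt_hfun n H (lt_of_lt_of_le hq2 hx.1).ne').hasDerivWithinAt)
    hbound hqmem hvmem
  rw [hq0, sub_zero, Real.norm_eq_abs, Real.norm_eq_abs] at lip
  calc (H * v + v ^ (1 - (n:ℤ))) ^ 2 = |H * v + v ^ (1 - (n:ℤ))| ^ 2 := (sq_abs _).symm
    _ ≤ (K * |v - q₁|) ^ 2 := by
        apply pow_le_pow_left₀ (abs_nonneg _) lip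
    _ = K ^ 2 * (v - q₁) ^ 2 := by rw [mul_pow, sq_abs]

-- derivative of h vanishes at q₁ when H * q₁^n = n - 1
private lemma pfun_zero (n : ℕ) (hn : 2 < n) {H q₁ : ℝ} (hq : 0 < q₁)
    (hq1n : H * q₁ ^ n = (n:ℝ) - 1) : H + (1 - (n:ℝ)) * q₁ ^ (-(n:ℤ)) = 0 := by
  have hne : (q₁:ℝ) ^ n ≠ 0 := by positivity
  rw [zpow_neg, zpow_natCast]
  have h1 : (H + (1 - (n:ℝ)) * (q₁ ^ n)⁻¹) * q₁ ^ n = H * q₁ ^ n + (1 - (n:ℝ)) := by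
    field_simp
  have h2 : (H + (1 - (n:ℝ)) * (q₁ ^ n)⁻¹) * q₁ ^ n = 0 := by
    rw [h1, hq1n]; ring
  rcases mul_eq_zero.mp h2 with h | h
  · exact h
  · exact absurd h hne

set_option maxHeartbeats 1000000 in
private lemma qb2 (n : ℕ) (hn : 2 < n) {H q₁ m : ℝ} (hq : 0 < q₁) (hH : 0 < H)
    (hq1n : H * q₁ ^ n = (n:ℝ) - 1) (hm : m = H * q₁ + q₁ ^ (1 - (n:ℤ))) :
    ∃ K, 0 < K ∧ ∀ v, |v - q₁| ≤ q₁ / 2 →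
      -(m ^ 2) + (H * v + v ^ (1 - (n:ℤ))) ^ 2 ≤ K ^ 2 * (v - q₁) ^ 2 := by
  have hq2 : (0:ℝ) < q₁ / 2 := by linarith
  have hnR : (2:ℝ) < n := by exact_mod_cast hn
  set s : Set ℝ := Icc (q₁ / 2) (3 * q₁ / 2) with hs
  have hqmem : q₁ ∈ s := ⟨by linarith, by linarith⟩
  set L : ℝ := (n:ℝ) * (n:ℝ) * (q₁ / 2) ^ (-(n:ℤ) - 1) + 1 with hLdef
  have hz1 : (0:ℝ) < (q₁ / 2) ^ (-(n:ℤ) - 1) := zpow_pos hq2 _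
  have hL : 0 < L := by
    have : (0:ℝ) ≤ (n:ℝ) * (n:ℝ) * (q₁ / 2) ^ (-(n:ℤ) - 1) := by positivity
    rw [hLdef]; linarith
  -- second-derivative bound on s
  have hpbound : ∀ x ∈ s, ‖(1 - (n:ℝ)) * (-(n:ℝ)) * x ^ (-(n:ℤ) - 1)‖ ≤ L := by
    intro x hx
    have hx0 : (0:ℝ) < x := lt_of_lt_of_le hq2 hx.1
    have hxz : (0:ℝ) < x ^ (-(n:ℤ) - 1) := zpow_pos hx0 _
    have hanti : x ^ (-(n:ℤ) - 1) ≤ (q₁ / 2) ^ (-(n:ℤ) - 1) := by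
      have := zpow_neg_anti hq2 hx.1 (n + 1)
      rw [show (-((n + 1 : ℕ) : ℤ)) = -(n:ℤ) - 1 by push_cast; ring] at this
      exact this
    rw [Real.norm_eq_abs, abs_mul, abs_mul]
    rw [abs_of_neg (by linarith : (1:ℝ) - n < 0), abs_of_neg (by linarith : -(n:ℝ) < 0),
      abs_of_pos hxz]
    have h1 : ((n:ℝ) - 1) * (n:ℝ) ≤ (n:ℝ) * (n:ℝ) := by nlinarith
    have h2 : (0:ℝ) ≤ ((n:ℝ) - 1) * (n:ℝ) := by nlinarith
    calc -(1 - (n:ℝ)) * -(-(n:ℝ)) * x ^ (-(n:ℤ) - 1)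
        = ((n:ℝ) - 1) * (n:ℝ) * x ^ (-(n:ℤ) - 1) := by ring
      _ ≤ (n:ℝ) * (n:ℝ) * (q₁ / 2) ^ (-(n:ℤ) - 1) := by
          apply mul_le_mul h1 hanti hxz.le (by positivity)
      _ ≤ L := by rw [hLdef]; linarith
  -- |p u| ≤ L * |u - q₁| on s
  have hp0 := pfun_zero n hn hq hq1n
  have step1 : ∀ u ∈ s, |H + (1 - (n:ℝ)) * u ^ (-(n:ℤ))| ≤ L * |u - q₁| := by
    intro u hu
    have lip := (convex_Icc (q₁ / 2) (3 * q₁ / 2)).norm_image_sub_le_of_norm_hasDerivWithin_le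
      (f := fun v : ℝ => H + (1 - (n:ℝ)) * v ^ (-(n:ℤ)))
      (f' := fun x : ℝ => (1 - (n:ℝ)) * (-(n:ℝ)) * x ^ (-(n:ℤ) - 1))
      (fun x hx => (hasDerivAt_pfun n H (lt_of_lt_of_le hq2 hx.1).ne').hasDerivWithinAt)
      hpbound hqmem hu
    rw [hp0, sub_zero, Real.norm_eq_abs, Real.norm_eq_abs] at lip
    exact lip
  -- |h v - m| ≤ L * |v - q₁|^2 for v ∈ s
  have step2 : ∀ v ∈ s, |(H * v + v ^ (1 - (n:ℤ))) - m| ≤ L * |v - q₁| * |v - q₁| := by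
    intro v hv
    have hs' : True := trivial
    have hsub : Icc (min q₁ v) (max q₁ v) ⊆ s := by
      intro u hu
      constructor
      · exact le_trans (le_min hqmem.1 hv.1) hu.1
      · exact le_trans hu.2 (max_le hqmem.2 hv.2)
    have hdist : ∀ u ∈ Icc (min q₁ v) (max q₁ v), |u - q₁| ≤ |v - q₁| := by
      intro u hu
      rcases le_total q₁ v with hc | hc
      · rw [min_eq_left hc, max_eq_right hc] at hu
        rw [abs_of_nonneg (by linarith [hu.1] : (0:ℝ) ≤ u - q₁),
          abs_of_nonneg (by linarith : (0:ℝ) ≤ v - q₁)]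
        linarith [hu.2]
      · rw [min_eq_right hc, max_eq_left hc] at hu
        rw [abs_of_nonpos (by linarith [hu.2] : u - q₁ ≤ 0),
          abs_of_nonpos (by linarith : v - q₁ ≤ 0)]
        linarith [hu.1]
    have lip := (convex_Icc (min q₁ v) (max q₁ v)).norm_image_sub_le_of_norm_hasDerivWithin_le
      (f := fun v : ℝ => H * v + v ^ (1 - (n:ℤ)))
      (f' := fun x : ℝ => H + (1 - (n:ℝ)) * x ^ (-(n:ℤ)))
      (fun x hx => (hasDerivAt_hfun n H
        (lt_of_lt_of_le hq2 (hsub hx).1).ne').hasDerivWithinAt)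
      (fun x hx => by
        rw [Real.norm_eq_abs]
        calc |H + (1 - (n:ℝ)) * x ^ (-(n:ℤ))| ≤ L * |x - q₁| := step1 x (hsub hx)
          _ ≤ L * |v - q₁| := by
              apply mul_le_mul_of_nonneg_left (hdist x hx) hL.le)
      ⟨min_le_left _ _, le_max_left _ _⟩
      ⟨min_le_right _ _, le_max_right _ _⟩
    rw [← hm, Real.norm_eq_abs, Real.norm_eq_abs] at lip
    rw [mul_assoc] at lip ⊢
    exact lip
  -- bound on |h v + m| on s
  have hm0 : 0 < m := by
    rw [hm]
    have : (0:ℝ) < q₁ ^ (1 - (n:ℤ)) := zpow_pos hq _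
    nlinarith
  set B : ℝ := H * (3 * q₁ / 2) + (q₁ / 2) ^ (1 - (n:ℤ)) + m with hBdef
  have hB : 0 < B := by
    have h1 : (0:ℝ) < (q₁ / 2) ^ (1 - (n:ℤ)) := zpow_pos hq2 _
    rw [hBdef]; nlinarith
  have hsum : ∀ v ∈ s, |(H * v + v ^ (1 - (n:ℤ))) + m| ≤ B := by
    intro v hv
    have hv0 : (0:ℝ) < v := lt_of_lt_of_le hq2 hv.1
    have hz : (0:ℝ) < v ^ (1 - (n:ℤ)) := zpow_pos hv0 _
    have hzle : v ^ (1 - (n:ℤ)) ≤ (q₁ / 2) ^ (1 - (n:ℤ)) := by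
      rw [zpow_one_sub' n hn hv0.ne', zpow_one_sub' n hn hq2.ne']
      exact inv_anti₀ (pow_pos hq2 _) (pow_le_pow_left₀ hq2.le hv.1 _)
    rw [abs_of_pos (by nlinarith : (0:ℝ) < (H * v + v ^ (1 - (n:ℤ))) + m)]
    rw [hBdef]
    have : H * v ≤ H * (3 * q₁ / 2) := by nlinarith [hv.2]
    linarith
  -- conclude
  have hLB : 0 < L * B := mul_pos hL hB
  refine ⟨L * B + 1, by linarith, fun v hv => ?_⟩
  have hvs : v ∈ s := by
    rw [abs_le] at hv
    exact ⟨by linarith [hv.1], by linarith [hv.2]⟩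
  have e1 : -(m ^ 2) + (H * v + v ^ (1 - (n:ℤ))) ^ 2
      = ((H * v + v ^ (1 - (n:ℤ))) - m) * ((H * v + v ^ (1 - (n:ℤ))) + m) := by ring
  have e2 : ((H * v + v ^ (1 - (n:ℤ))) - m) * ((H * v + v ^ (1 - (n:ℤ))) + m)
      ≤ (L * |v - q₁| * |v - q₁|) * B := by
    calc ((H * v + v ^ (1 - (n:ℤ))) - m) * ((H * v + v ^ (1 - (n:ℤ))) + m)
        ≤ |((H * v + v ^ (1 - (n:ℤ))) - m) * ((H * v + v ^ (1 - (n:ℤ))) + m)| :=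
          le_abs_self _
      _ = |(H * v + v ^ (1 - (n:ℤ))) - m| * |(H * v + v ^ (1 - (n:ℤ))) + m| := abs_mul _ _
      _ ≤ (L * |v - q₁| * |v - q₁|) * B := by
          apply mul_le_mul (step2 v hvs) (hsum v hvs) (abs_nonneg _) (by positivity)
  have e3 : L * |v - q₁| * |v - q₁| * B = (L * B) * (v - q₁) ^ 2 := by
    rw [← sq_abs (v - q₁)]
    ring
  have e4 : (L * B) * (v - q₁) ^ 2 ≤ (L * B + 1) ^ 2 * (v - q₁) ^ 2 := by
    apply mul_le_mul_of_nonneg_right ?_ (sq_nonneg _)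
    nlinarith [hLB, sq_nonneg (L * B)]
  calc -(m ^ 2) + (H * v + v ^ (1 - (n:ℤ))) ^ 2
      = ((H * v + v ^ (1 - (n:ℤ))) - m) * ((H * v + v ^ (1 - (n:ℤ))) + m) := e1
    _ ≤ L * |v - q₁| * |v - q₁| * B := e2
    _ = (L * B) * (v - q₁) ^ 2 := e3
    _ ≤ (L * B + 1) ^ 2 * (v - q₁) ^ 2 := e4

private lemma hfun_anti (n : ℕ) (hn : 2 < n) {H q₁ : ℝ} (hH : 0 < H) (hq : 0 < q₁)
    (hq1n : H * q₁ ^ n = (n:ℝ) - 1) :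
    AntitoneOn (fun v : ℝ => H * v + v ^ (1 - (n:ℤ))) (Ioc 0 q₁) := by
  have hnR : (2:ℝ) < n := by exact_mod_cast hn
  apply antitoneOn_of_deriv_nonpos (convex_Ioc 0 q₁)
  · intro x hx
    exact ((hasDerivAt_hfun n H (ne_of_gt hx.1)).continuousAt).continuousWithinAt
  · intro x hx
    rw [interior_Ioc] at hx
    exact ((hasDerivAt_hfun n H (ne_of_gt hx.1)).differentiableAt).differentiableWithinAt
  · intro x hx
    rw [interior_Ioc] at hx
    rw [(hasDerivAt_hfun n H (ne_of_gt hx.1)).deriv]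
    have hx0 : (0:ℝ) < x := hx.1
    have hxn : (0:ℝ) < x ^ n := pow_pos hx0 n
    have hle : H * x ^ n ≤ (n:ℝ) - 1 := by
      have : x ^ n ≤ q₁ ^ n := pow_le_pow_left₀ hx0.le hx.2.le n
      nlinarith
    rw [zpow_neg, zpow_natCast]
    have hinv : (0:ℝ) < (x ^ n)⁻¹ := inv_pos.mpr hxn
    have hc : x ^ n * (x ^ n)⁻¹ = 1 := mul_inv_cancel₀ hxn.ne'
    nlinarith [mul_le_mul_of_nonneg_right hle hinv.le]

private lemma hfun_mono (n : ℕ) (hn : 2 < n) {H q₁ : ℝ} (hH : 0 < H) (hq : 0 < q₁)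
    (hq1n : H * q₁ ^ n = (n:ℝ) - 1) :
    MonotoneOn (fun v : ℝ => H * v + v ^ (1 - (n:ℤ))) (Ici q₁) := by
  have hnR : (2:ℝ) < n := by exact_mod_cast hn
  apply monotoneOn_of_deriv_nonneg (convex_Ici q₁)
  · intro x hx
    exact ((hasDerivAt_hfun n H (ne_of_gt (lt_of_lt_of_le hq hx))).continuousAt).continuousWithinAt
  · intro x hx
    rw [interior_Ici] at hx
    exact ((hasDerivAt_hfun n H
      (ne_of_gt (lt_trans hq hx))).differentiableAt).differentiableWithinAt
  · intro x hx
    rw [interior_Ici] at hx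
    rw [(hasDerivAt_hfun n H (ne_of_gt (lt_trans hq hx))).deriv]
    have hx0 : (0:ℝ) < x := lt_trans hq hx
    have hxn : (0:ℝ) < x ^ n := pow_pos hx0 n
    have hle : (n:ℝ) - 1 ≤ H * x ^ n := by
      have : q₁ ^ n ≤ x ^ n := pow_le_pow_left₀ hq.le hx.le n
      nlinarith
    rw [zpow_neg, zpow_natCast]
    have hinv : (0:ℝ) < (x ^ n)⁻¹ := inv_pos.mpr hxn
    have hc : x ^ n * (x ^ n)⁻¹ = 1 := mul_inv_cancel₀ hxn.ne'
    nlinarith [mul_le_mul_of_nonneg_right hle hinv.le]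

private lemma hfun_min (n : ℕ) (hn : 2 < n) {H q₁ : ℝ} (hH : 0 < H) (hq : 0 < q₁)
    (hq1n : H * q₁ ^ n = (n:ℝ) - 1) :
    ∀ v : ℝ, 0 < v → H * q₁ + q₁ ^ (1 - (n:ℤ)) ≤ H * v + v ^ (1 - (n:ℤ)) := by
  intro v hv
  rcases le_total v q₁ with hc | hc
  · exact hfun_anti n hn hH hq hq1n ⟨hv, hc⟩ ⟨hq, le_rfl⟩ hc
  · exact hfun_mono n hn hH hq hq1n (Set.mem_Ici.mpr le_rfl) hc hc

set_option maxHeartbeats 1000000 in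
/-- Theorem 11.11 (Lorentz–Minkowski case, a = 0, b·d = −1, H ≠ 0): along any
positive nonconstant global solution of `g′² = C + (H·g + g^(1−n))²` one has
`g(t) > q₁(H)` for all `t`; equivalently `√(n(n−1))·g(t)^(−n) < b₃(H)` for all
`t`, where `q₁(H) = (−1/H)^(1/n)` for `H < 0`, `q₁(H) = ((n−1)/H)^(1/n)` for
`H > 0`, and `b₃(H) = −√(n(n−1))·H` for `H < 0`, `b₃(H) = H·√n/√(n−1)` for
`H > 0`. -/
theorem stmt_18 (n : ℕ) (hn : 2 < n) (H C : ℝ) (hH : H ≠ 0)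
    (g : ℝ → ℝ) (hg : Differentiable ℝ g) (hgpos : ∀ t, 0 < g t)
    (hgnc : ∃ t₁ t₂ : ℝ, g t₁ ≠ g t₂)
    (hode : ∀ t : ℝ, (deriv g t) ^ 2 =
      C + (H * g t + g t ^ (1 - (n : ℤ))) ^ 2)
    (q₁ : ℝ)
    (hq₁ : q₁ = if H < 0 then (-1 / H) ^ ((1 : ℝ) / (n : ℝ))
      else (((n : ℝ) - 1) / H) ^ ((1 : ℝ) / (n : ℝ)))
    (b₃ : ℝ)
    (hb₃ : b₃ = if H < 0 then -Real.sqrt ((n : ℝ) * ((n : ℝ) - 1)) * H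
      else H * Real.sqrt n / Real.sqrt ((n : ℝ) - 1)) :
    (∀ t : ℝ, q₁ < g t) ∧
    (∀ t : ℝ, Real.sqrt ((n : ℝ) * ((n : ℝ) - 1)) * g t ^ (-(n : ℤ)) < b₃) := by
  have hnR : (2:ℝ) < (n:ℝ) := by exact_mod_cast hn
  have hn0 : n ≠ 0 := by omega
  -- a point with nonzero derivative
  obtain ⟨t₁, t₂, hne12⟩ := hgnc
  obtain ⟨ta, tb, htab, hnab⟩ : ∃ a b : ℝ, a < b ∧ g a ≠ g b := by
    rcases lt_trichotomy t₁ t₂ with hlt | heq | hgt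
    · exact ⟨t₁, t₂, hlt, hne12⟩
    · exact absurd (by rw [heq]) hne12
    · exact ⟨t₂, t₁, hgt, fun hh => hne12 hh.symm⟩
  obtain ⟨t₀, ht₀mem, ht₀⟩ := exists_deriv_eq_slope g htab hg.continuous.continuousOn
    hg.differentiableOn
  have hd₀ : deriv g t₀ ≠ 0 := by
    rw [ht₀]
    exact div_ne_zero (sub_ne_zero.mpr (Ne.symm hnab)) (by linarith)
  rcases hH.lt_or_gt with hHneg | hHpos
  · -- case H < 0
    have hq₁' : q₁ = (-1 / H) ^ ((1:ℝ) / (n:ℝ)) := by rw [hq₁, if_pos hHneg]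
    have hb₃' : b₃ = -Real.sqrt ((n:ℝ) * ((n:ℝ) - 1)) * H := by rw [hb₃, if_pos hHneg]
    have hx : (0:ℝ) < -1 / H := by
      rw [div_pos_iff]
      right
      constructor <;> linarith
    have hqpos : 0 < q₁ := by rw [hq₁']; exact Real.rpow_pos_of_pos hx _
    have hq1n : q₁ ^ n = -1 / H := by
      rw [hq₁', ← Real.rpow_natCast ((-1 / H) ^ ((1:ℝ) / (n:ℝ))) n, ← Real.rpow_mul hx.le]
      rw [one_div, inv_mul_cancel₀ (by positivity : (n:ℝ) ≠ 0), Real.rpow_one]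
    have hq1n' : H * q₁ ^ n = -1 := by rw [hq1n]; field_simp
    have hposlt : ∀ v : ℝ, 0 < v → v < q₁ → 0 < H * v + v ^ (1 - (n:ℤ)) := by
      intro v hv hvq
      rw [zpow_one_sub n hv]
      have hvn : 0 < v ^ n := pow_pos hv n
      have h1 : v ^ n < q₁ ^ n := pow_lt_pow_left₀ hvq hv.le hn0
      have h2 : -1 < H * v ^ n := by nlinarith
      have hinv : 0 < (v ^ n)⁻¹ := inv_pos.mpr hvn
      have he : H * v + v * (v ^ n)⁻¹ = v * (H * v ^ n + 1) * (v ^ n)⁻¹ := by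
        field_simp
      rw [he]
      have h3 : 0 < H * v ^ n + 1 := by linarith
      positivity
    have hanti : ∀ u w : ℝ, 0 < u → u ≤ w →
        H * w + w ^ (1 - (n:ℤ)) ≤ H * u + u ^ (1 - (n:ℤ)) := by
      intro u w hu huw
      have h1 : H * w ≤ H * u := mul_le_mul_of_nonpos_left huw hHneg.le
      have h2 : w ^ (1 - (n:ℤ)) ≤ u ^ (1 - (n:ℤ)) := by
        rw [zpow_one_sub' n hn hu.ne', zpow_one_sub' n hn (lt_of_lt_of_le hu huw).ne']
        exact inv_anti₀ (pow_pos hu _) (pow_le_pow_left₀ hu.le huw _)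
      linarith
    have hC : C ≤ 0 := by
      by_contra hCpos
      push_neg at hCpos
      refine esc hg hgpos 0 (Real.sqrt_pos.mpr hCpos) ?_ ?_
      · rw [← Real.sqrt_sq_eq_abs]
        apply Real.sqrt_le_sqrt
        rw [hode 0]
        nlinarith [sq_nonneg (H * g 0 + g 0 ^ (1 - (n:ℤ)))]
      · intro t _
        rw [Real.sq_sqrt hCpos.le, hode t]
        nlinarith [sq_nonneg (H * g t + g t ^ (1 - (n:ℤ)))]
    have key : ∀ t, q₁ < g t := by
      intro t
      by_contra hle
      push_neg at hle
      by_cases htouch : ∃ s, g s = q₁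
      · obtain ⟨s₀, hs₀⟩ := htouch
        have hhq : H * q₁ + q₁ ^ (1 - (n:ℤ)) = 0 := by
          rw [zpow_one_sub n hqpos]
          have hne : (q₁:ℝ) ^ n ≠ 0 := by positivity
          have he : H * q₁ + q₁ * (q₁ ^ n)⁻¹ = q₁ * (H * q₁ ^ n + 1) * (q₁ ^ n)⁻¹ := by
            field_simp
          rw [he, hq1n']
          ring
        have hC0 : C = 0 := by
          have h1 := hode s₀
          rw [hs₀, hhq] at h1
          nlinarith [sq_nonneg (deriv g s₀)]
        obtain ⟨K, hK, hquad⟩ := qb1 n hn hqpos hq1n'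
        have hconst := gron_const hg (F := fun v => C + (H * v + v ^ (1 - (n:ℤ))) ^ 2)
          (fun s => hode s) (half_pos hqpos) hK
          (fun v hv => by
            rw [hC0, zero_add]
            exact hquad v hv) hs₀
        exact hnab (by rw [hconst ta, hconst tb])
      · push_neg at htouch
        have hall : ∀ s, g s < q₁ := by
          intro s
          rcases lt_or_ge (g s) q₁ with h' | h'
          · exact h'
          exfalso
          have h'' : q₁ < g s := lt_of_le_of_ne h' (Ne.symm (htouch s))
          have hgtq : g t < q₁ := lt_of_le_of_ne hle (htouch t)
          obtain ⟨u, hu⟩ := intermediate_value_univ t s hg.continuous ⟨hgtq.le, h''.le⟩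
          exact htouch u hu
        refine esc hg hgpos t₀ (abs_pos.mpr hd₀) le_rfl ?_
        intro s hs
        rw [sq_abs, hode t₀, hode s]
        have h1 := hposlt (g t₀) (hgpos t₀) (hall t₀)
        have h2 := hanti (g s) (g t₀) (hgpos s) hs
        nlinarith
    refine ⟨key, fun t => ?_⟩
    rw [hb₃']
    have hgt := key t
    have hgtpos := hgpos t
    have hsq : 0 < Real.sqrt ((n:ℝ) * ((n:ℝ) - 1)) := Real.sqrt_pos.mpr (by nlinarith)
    have hzp : g t ^ (-(n:ℤ)) = ((g t) ^ n)⁻¹ := by rw [zpow_neg, zpow_natCast]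
    have hpow : q₁ ^ n < g t ^ n := pow_lt_pow_left₀ hgt hqpos.le hn0
    have hgn : 0 < g t ^ n := pow_pos hgtpos n
    have hinvlt : ((g t) ^ n)⁻¹ < -H := by
      have h1 : 1 < -H * g t ^ n := by nlinarith
      have hinv : 0 < ((g t) ^ n)⁻¹ := inv_pos.mpr hgn
      have hc : g t ^ n * (g t ^ n)⁻¹ = 1 := mul_inv_cancel₀ hgn.ne'
      nlinarith
    rw [hzp]
    have step : Real.sqrt ((n:ℝ) * ((n:ℝ) - 1)) * ((g t) ^ n)⁻¹
        < Real.sqrt ((n:ℝ) * ((n:ℝ) - 1)) * (-H) := mul_lt_mul_of_pos_left hinvlt hsq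
    exact step.trans_eq (by ring)
  · -- case H > 0
    have hq₁' : q₁ = (((n:ℝ) - 1) / H) ^ ((1:ℝ) / (n:ℝ)) := by
      rw [hq₁, if_neg (not_lt.mpr hHpos.le)]
    have hb₃' : b₃ = H * Real.sqrt n / Real.sqrt ((n:ℝ) - 1) := by
      rw [hb₃, if_neg (not_lt.mpr hHpos.le)]
    have hx : (0:ℝ) < ((n:ℝ) - 1) / H := div_pos (by linarith) hHpos
    have hqpos : 0 < q₁ := by rw [hq₁']; exact Real.rpow_pos_of_pos hx _
    have hq1n : q₁ ^ n = ((n:ℝ) - 1) / H := by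
      rw [hq₁', ← Real.rpow_natCast ((((n:ℝ) - 1) / H) ^ ((1:ℝ) / (n:ℝ))) n,
        ← Real.rpow_mul hx.le]
      rw [one_div, inv_mul_cancel₀ (by positivity : (n:ℝ) ≠ 0), Real.rpow_one]
    have hq1n' : H * q₁ ^ n = (n:ℝ) - 1 := by rw [hq1n]; field_simp
    have hmpos : 0 < H * q₁ + q₁ ^ (1 - (n:ℤ)) := by
      have h1 : (0:ℝ) < q₁ ^ (1 - (n:ℤ)) := zpow_pos hqpos _
      nlinarith
    have hmin := hfun_min n hn hHpos hqpos hq1n'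
    have hCm : C + (H * q₁ + q₁ ^ (1 - (n:ℤ))) ^ 2 ≤ 0 := by
      by_contra hCpos
      push_neg at hCpos
      refine esc hg hgpos 0 (Real.sqrt_pos.mpr hCpos) ?_ ?_
      · rw [← Real.sqrt_sq_eq_abs]
        apply Real.sqrt_le_sqrt
        rw [hode 0]
        have := hmin (g 0) (hgpos 0)
        nlinarith
      · intro t _
        rw [Real.sq_sqrt hCpos.le, hode t]
        have := hmin (g t) (hgpos t)
        nlinarith
    have key : ∀ t, q₁ < g t := by
      intro t
      by_contra hle
      push_neg at hle
      by_cases htouch : ∃ s, g s = q₁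
      · obtain ⟨s₀, hs₀⟩ := htouch
        have hC0 : C = -((H * q₁ + q₁ ^ (1 - (n:ℤ))) ^ 2) := by
          have h1 := hode s₀
          rw [hs₀] at h1
          nlinarith [sq_nonneg (deriv g s₀)]
        obtain ⟨K, hK, hquad⟩ := qb2 n hn hqpos hHpos hq1n' rfl
        have hconst := gron_const hg (F := fun v => C + (H * v + v ^ (1 - (n:ℤ))) ^ 2)
          (fun s => hode s) (half_pos hqpos) hK
          (fun v hv => by
            rw [hC0]
            exact hquad v hv) hs₀
        exact hnab (by rw [hconst ta, hconst tb])
      · push_neg at htouch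
        have hall : ∀ s, g s < q₁ := by
          intro s
          rcases lt_or_ge (g s) q₁ with h' | h'
          · exact h'
          exfalso
          have h'' : q₁ < g s := lt_of_le_of_ne h' (Ne.symm (htouch s))
          have hgtq : g t < q₁ := lt_of_le_of_ne hle (htouch t)
          obtain ⟨u, hu⟩ := intermediate_value_univ t s hg.continuous ⟨hgtq.le, h''.le⟩
          exact htouch u hu
        refine esc hg hgpos t₀ (abs_pos.mpr hd₀) le_rfl ?_
        intro s hs
        rw [sq_abs, hode t₀, hode s]
        have h1 : 0 < H * g t₀ + g t₀ ^ (1 - (n:ℤ)) := by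
          have h2 : (0:ℝ) < g t₀ ^ (1 - (n:ℤ)) := zpow_pos (hgpos t₀) _
          nlinarith [hgpos t₀]
        have h2 : H * g t₀ + g t₀ ^ (1 - (n:ℤ)) ≤ H * g s + g s ^ (1 - (n:ℤ)) :=
          hfun_anti n hn hHpos hqpos hq1n'
            ⟨hgpos s, le_trans hs (hall t₀).le⟩ ⟨hgpos t₀, (hall t₀).le⟩ hs
        nlinarith
    refine ⟨key, fun t => ?_⟩
    rw [hb₃']
    have hgt := key t
    have hgtpos := hgpos t
    have hgn : 0 < g t ^ n := pow_pos hgtpos n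
    have hpow : q₁ ^ n < g t ^ n := pow_lt_pow_left₀ hgt hqpos.le hn0
    have hzp : g t ^ (-(n:ℤ)) = ((g t) ^ n)⁻¹ := by rw [zpow_neg, zpow_natCast]
    rw [hzp]
    have hinvlt : ((g t) ^ n)⁻¹ < H / ((n:ℝ) - 1) := by
      have h1 : (n:ℝ) - 1 < H * g t ^ n := by nlinarith
      have hinv : 0 < ((g t) ^ n)⁻¹ := inv_pos.mpr hgn
      have hc : g t ^ n * (g t ^ n)⁻¹ = 1 := mul_inv_cancel₀ hgn.ne'
      rw [lt_div_iff₀ (by linarith : (0:ℝ) < (n:ℝ) - 1)]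
      nlinarith
    have hsq1 : 0 < Real.sqrt ((n:ℝ) - 1) := Real.sqrt_pos.mpr (by linarith)
    have e1 : Real.sqrt ((n:ℝ) * ((n:ℝ) - 1)) = Real.sqrt (n:ℝ) * Real.sqrt ((n:ℝ) - 1) :=
      Real.sqrt_mul (by linarith) _
    have e2 : Real.sqrt ((n:ℝ) - 1) * Real.sqrt ((n:ℝ) - 1) = (n:ℝ) - 1 :=
      Real.mul_self_sqrt (by linarith)
    have step : Real.sqrt ((n:ℝ) * ((n:ℝ) - 1)) * ((g t) ^ n)⁻¹
        < Real.sqrt ((n:ℝ) * ((n:ℝ) - 1)) * (H / ((n:ℝ) - 1)) :=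
      mul_lt_mul_of_pos_left hinvlt (Real.sqrt_pos.mpr (by nlinarith))
    have e3 : Real.sqrt ((n:ℝ) * ((n:ℝ) - 1)) * (H / ((n:ℝ) - 1))
        = H * Real.sqrt n / Real.sqrt ((n:ℝ) - 1) := by
      rw [e1, ← e2]
      field_simp
      ring_nf; rw [Real.sqrt_sq (Real.sqrt_nonneg _)]
    exact step.trans_eq e3
end

section
/- Let n > 2 be an integer and C ∈ ℝ. Then there is no differentiable nonconstant function g : ℝ → ℝ with g(t) > 0 and g′(t)² = C + g(t)^(2−2n) for all t ∈ ℝ. -/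
open Set

/-- Comparison: in `(0,∞)`, `x ↦ (x^m)⁻¹` is strictly antitone. -/
private lemma inv_pow_lt_inv_pow {m : ℕ} (hm : m ≠ 0) {x y : ℝ} (hx : 0 < x) (hy : 0 < y)
    (h : (x ^ m)⁻¹ < (y ^ m)⁻¹) : y < x := by
  have := (inv_lt_inv₀ (pow_pos hx m) (pow_pos hy m)).mp h
  by_contra hxy
  push_neg at hxy
  exact absurd this (not_lt.mpr (pow_le_pow_left₀ hx.le hxy m))

/-- Auxiliary: no positive global solution of `g'² = C + (g^m)⁻¹` with a point of
positive derivative. -/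
private lemma aux_no_sol (n : ℕ) (hn : 2 < n) (C : ℝ) (g : ℝ → ℝ)
    (hg : Differentiable ℝ g) (hpos : ∀ t, 0 < g t)
    (heq : ∀ t, (deriv g t) ^ 2 = C + (g t ^ (2 * n - 2))⁻¹)
    (t₀ : ℝ) (hc : 0 < deriv g t₀) : False := by
  set m : ℕ := 2 * n - 2 with hmdef
  have hm : m ≠ 0 := by omega
  set c : ℝ := deriv g t₀ with hcdef
  -- comparison lemma
  have cmp : ∀ s u : ℝ, (deriv g u) ^ 2 < (deriv g s) ^ 2 → g s < g u := by
    intro s u h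
    rw [heq s, heq u] at h
    exact inv_pow_lt_inv_pow hm (hpos u) (hpos s) (by linarith)
  -- derivative lower bound where g ≤ g t₀ and deriv positive
  have cge : ∀ u : ℝ, g u ≤ g t₀ → 0 < deriv g u → c ≤ deriv g u := by
    intro u hu hdu
    have h1 : (g t₀ ^ m)⁻¹ ≤ (g u ^ m)⁻¹ := by
      apply inv_anti₀ (pow_pos (hpos u) m)
      exact pow_le_pow_left₀ (hpos u).le hu m
    have h2 : c ^ 2 ≤ (deriv g u) ^ 2 := by rw [heq t₀, heq u]; linarith
    nlinarith
  -- all zeros of the derivative have the same value of g, strictly above g t₀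
  have zeroVal : ∀ s : ℝ, deriv g s = 0 → g t₀ < g s := by
    intro s hs
    apply cmp t₀ s
    rw [hs]
    simpa using pow_pos hc 2
  have zeroEq : ∀ s s' : ℝ, deriv g s = 0 → deriv g s' = 0 → g s = g s' := by
    intro s s' hs hs'
    have h1 : (g s ^ m)⁻¹ = (g s' ^ m)⁻¹ := by
      have e1 := heq s; have e2 := heq s'
      rw [hs] at e1; rw [hs'] at e2
      simp only [ne_eq, OfNat.ofNat_ne_zero, not_false_eq_true, zero_pow] at e1 e2
      linarith
    have h2 : g s ^ m = g s' ^ m := inv_inj.mp h1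
    exact (pow_left_strictMonoOn₀ hm).injOn (le_of_lt (hpos s)) (le_of_lt (hpos s')) h2
  -- Darboux: between a nonpositive and a positive derivative value there is a zero
  have darb : ∀ a b : ℝ, a ≤ b → deriv g a ≤ 0 → 0 < deriv g b →
      ∃ z ∈ Icc a b, deriv g z = 0 := by
    intro a b hab ha hb
    have hf : ∀ x ∈ Icc a b, HasDerivWithinAt g (deriv g x) (Icc a b) x :=
      fun x _ => (hg x).hasDerivAt.hasDerivWithinAt
    have := exists_hasDerivWithinAt_eq_of_ge_of_le hab hf (m := 0) ha hb.le
    obtain ⟨z, hz, hz0⟩ := this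
    exact ⟨z, hz, hz0⟩
  -- no accumulation of zeros of the derivative at a point p with g p ≤ g t₀
  have nozero_accum : ∀ p : ℝ, g p ≤ g t₀ →
      ¬ (∀ ε > (0:ℝ), ∃ z, |z - p| ≤ ε ∧ deriv g z = 0) := by
    intro p hp hacc
    obtain ⟨z₁, _, hz₁⟩ := hacc 1 one_pos
    have hM : g t₀ < g z₁ := zeroVal z₁ hz₁
    have he : (0:ℝ) < g z₁ - g p := by linarith
    have hcont : ContinuousAt g p := hg.continuous.continuousAt
    rw [Metric.continuousAt_iff] at hcont
    obtain ⟨δ, hδ, hδ'⟩ := hcont (g z₁ - g p) he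
    obtain ⟨z, hz, hz0⟩ := hacc (δ/2) (by linarith)
    have h1 : g z = g z₁ := zeroEq z z₁ hz0 hz₁
    have h2 : dist z p < δ := by
      rw [Real.dist_eq]; linarith [abs_nonneg (z - p)]
    have := hδ' h2
    rw [Real.dist_eq, h1] at this
    have : g z₁ - g p < g z₁ - g p := lt_of_le_of_lt (le_abs_self _) this
    exact lt_irrefl _ this
  -- Step 1: the derivative is positive on a left neighborhood of t₀
  have step1 : ∃ ε > (0:ℝ), ∀ s ∈ Icc (t₀ - ε) t₀, 0 < deriv g s := by
    by_contra hno
    push_neg at hno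
    apply nozero_accum t₀ le_rfl
    intro ε hε
    obtain ⟨s, hs, hs0⟩ := hno ε hε
    obtain ⟨z, hz, hz0⟩ := darb s t₀ hs.2 hs0 hc
    refine ⟨z, ?_, hz0⟩
    rw [abs_le]
    constructor <;> [linarith [hz.1, hs.1]; linarith [hz.2]]
  obtain ⟨ε, hε, hεA⟩ := step1
  -- the set of left endpoints from which the derivative stays positive up to t₀
  set A : Set ℝ := {t | t ≤ t₀ ∧ ∀ u ∈ Icc t t₀, 0 < deriv g u} with hA
  have hAmem : t₀ - ε ∈ A := ⟨by linarith, hεA⟩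
  have hAne : A.Nonempty := ⟨t₀ - ε, hAmem⟩
  -- on any interval from A, g is monotone and the derivative is ≥ c
  have monoA : ∀ t ∈ A, ∀ u ∈ Icc t t₀, g u ≤ g t₀ ∧ c ≤ deriv g u := by
    intro t ht u hu
    have hmono : MonotoneOn g (Icc t t₀) := by
      apply monotoneOn_of_deriv_nonneg (convex_Icc t t₀) hg.continuous.continuousOn
        (hg.differentiableOn)
      intro x hx
      rw [interior_Icc] at hx
      exact (ht.2 x ⟨hx.1.le, hx.2.le⟩).le
    have hgu : g u ≤ g t₀ := hmono hu (right_mem_Icc.mpr ht.1) hu.2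
    exact ⟨hgu, cge u hgu (ht.2 u hu)⟩
  by_cases hbd : ∀ t : ℝ, ∃ t' ∈ A, t' < t
  · -- A is unbounded below: derivative ≥ c everywhere left of t₀, so g becomes negative
    have hall : ∀ u ≤ t₀, c ≤ deriv g u := by
      intro u hu
      obtain ⟨t', ht', htu⟩ := hbd u
      exact (monoA t' ht' u ⟨htu.le, hu⟩).2
    set T : ℝ := t₀ - g t₀ / c - 1 with hT
    have hTlt : T < t₀ := by
      have : 0 < g t₀ / c := div_pos (hpos t₀) hc
      rw [hT]; linarith
    obtain ⟨ξ, hξ, hξeq⟩ := exists_deriv_eq_slope g hTlt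
      (hg.continuous.continuousOn) (hg.differentiableOn)
    have hξc : c ≤ deriv g ξ := hall ξ (by linarith [hξ.2])
    rw [hξeq] at hξc
    have h1 : c * (t₀ - T) ≤ g t₀ - g T := by
      rw [le_div_iff₀ (by linarith)] at hξc
      linarith [hξc]
    have h2 : c * (t₀ - T) = g t₀ + c := by
      rw [hT]; field_simp; ring
    have := hpos T
    linarith
  · -- A is bounded below: take τ = inf A and derive a contradiction
    push_neg at hbd
    obtain ⟨B, hB⟩ := hbd
    have hbdd : BddBelow A := ⟨B, fun t ht => hB t ht⟩
    set τ : ℝ := sInf A with hτ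
    have hτle : τ ≤ t₀ - ε := csInf_le hbdd hAmem
    have hτlt : τ < t₀ := by linarith
    -- derivative ≥ c strictly to the right of τ (up to t₀)
    have derivτ : ∀ u, τ < u → u ≤ t₀ → c ≤ deriv g u := by
      intro u hu1 hu2
      obtain ⟨t, ht, htu⟩ := exists_lt_of_csInf_lt hAne hu1
      exact (monoA t ht u ⟨htu.le, hu2⟩).2
    -- g τ ≤ g t₀
    have gτ : g τ ≤ g t₀ := by
      have hmono : MonotoneOn g (Icc τ t₀) := by
        apply monotoneOn_of_deriv_nonneg (convex_Icc τ t₀) hg.continuous.continuousOn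
          (hg.differentiableOn)
        intro x hx
        rw [interior_Icc] at hx
        linarith [derivτ x hx.1 hx.2.le]
      exact hmono (left_mem_Icc.mpr hτlt.le) (right_mem_Icc.mpr hτlt.le) hτlt.le
    -- zeros of the derivative accumulate at τ: contradiction
    apply nozero_accum τ gτ
    intro δ hδ
    -- τ - δ is not in A, so the derivative is nonpositive somewhere in [τ-δ, τ]
    have hnotin : τ - δ ∉ A := fun h => absurd (csInf_le hbdd h) (by rw [← hτ]; linarith)
    have hne' : ∃ u ∈ Icc (τ - δ) t₀, deriv g u ≤ 0 := by
      by_contra hco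
      push_neg at hco
      exact hnotin ⟨by linarith, fun u hu => hco u hu⟩
    obtain ⟨u, hu, hu0⟩ := hne'
    have huτ : u ≤ τ := by
      by_contra hx
      push_neg at hx
      linarith [derivτ u hx hu.2]
    -- point b slightly right of τ with positive derivative
    set b : ℝ := min (τ + δ) t₀ with hb
    have hτb : τ < b := lt_min (by linarith) hτlt
    have hbt₀ : b ≤ t₀ := min_le_right _ _
    have hdb : 0 < deriv g b := lt_of_lt_of_le hc (derivτ b hτb hbt₀)
    obtain ⟨z, hz, hz0⟩ := darb u b (by linarith) hu0 hdb
    refine ⟨z, ?_, hz0⟩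
    rw [abs_le]
    constructor
    · linarith [hz.1, hu.1]
    · have : b ≤ τ + δ := min_le_left _ _
      linarith [hz.2]

/-- H = 0 restriction in Theorem 10.5 (Lorentz–Minkowski case, a = 0,
b·d = −1): for any `C` there is no positive nonconstant differentiable global
solution of `g′² = C + g^(2−2n)`. -/
theorem stmt_19 (n : ℕ) (hn : 2 < n) (C : ℝ) :
    ¬ ∃ g : ℝ → ℝ, Differentiable ℝ g ∧ (∀ t, 0 < g t) ∧
      (∃ t₁ t₂ : ℝ, g t₁ ≠ g t₂) ∧
      (∀ t : ℝ, (deriv g t) ^ 2 = C + g t ^ (2 - 2 * (n : ℤ))) := by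
  rintro ⟨g, hg, hpos, ⟨t₁, t₂, hne⟩, heq⟩
  -- rewrite the zpow as an inverse of a natural power
  have heq' : ∀ t, (deriv g t) ^ 2 = C + (g t ^ (2 * n - 2))⁻¹ := by
    intro t
    have h : (2 - 2 * (n : ℤ)) = -((2 * n - 2 : ℕ) : ℤ) := by push_cast [Nat.cast_sub]; omega
    rw [heq t, h, zpow_neg, zpow_natCast]
  -- there is a point of nonzero derivative
  have hξ : ∃ ξ, deriv g ξ ≠ 0 := by
    by_contra h
    push_neg at h
    exact hne (is_const_of_deriv_eq_zero hg h t₁ t₂)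
  obtain ⟨ξ, hξ⟩ := hξ
  rcases hξ.lt_or_gt with hneg | hposd
  · -- reflect: consider h t = g (-t)
    set h : ℝ → ℝ := fun t => g (-t) with hh
    have hdiff : Differentiable ℝ h := hg.comp (differentiable_id.neg)
    have hderiv : ∀ t, deriv h t = -deriv g (-t) := by
      intro t
      have h1 : HasDerivAt h (deriv g (-t) * (-1)) t :=
        (hg (-t)).hasDerivAt.comp t (hasDerivAt_neg t)
      rw [h1.deriv]; ring
    have heqh : ∀ t, (deriv h t) ^ 2 = C + (h t ^ (2 * n - 2))⁻¹ := by
      intro t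
      rw [hderiv t]
      simpa using heq' (-t)
    exact aux_no_sol n hn C h hdiff (fun t => hpos (-t)) heqh (-ξ)
      (by rw [hderiv]; simp; linarith)
  · exact aux_no_sol n hn C g hg hpos heq' ξ hposd
end
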